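/- arXiv:2503.19091 — 12 statements merged into one kernel-verified Lean document; each statement's English description precedes it below -/
import Mathlib

section
/- Let d, m be positive integers with m ≤ d, let P, P̄ and C₁, …, C_m be symmetric d×d real matrices, let g, ḡ ∈ ℝ^d, and let G be an m×d real matrix such that the smallest eigenvalue of G Gᵀ is at least κ₁ > 0. Assume ‖P‖ ≤ L₁, ‖Cᵢ‖ ≤ L₂ for every i, and ‖g‖ ≤ κ_∇f. Define λ̄ = −(G Gᵀ)⁻¹ G ḡ and H̄ = P̄ + Σ_{i=1}^m λ̄ᵢ Cᵢ. If ‖P̄ − P‖ ≤ ε_h + κ_h Δ and ‖ḡ − g‖ ≤ ε_g + κ_g Δ² for some Δ with 0 ≤ Δ ≤ Δ_max (where ε_h, ε_g, κ_h, κ_g ≥ 0), then ‖H̄‖ ≤ ε_h + κ_h Δ_max + L₁ + (√m · L₂ / √κ₁) · (ε_g + κ_g Δ_max² + κ_∇f). -/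
open Matrix
open scoped Matrix.Norms.L2Operator

lemma aux_psd {m : ℕ} {M : Matrix (Fin m) (Fin m) ℝ} (hM : M.IsHermitian) {κ : ℝ}
    (h : ∀ i, κ ≤ hM.eigenvalues i) (y : Fin m → ℝ) :
    κ * (y ⬝ᵥ y) ≤ y ⬝ᵥ (M *ᵥ y) := by
  have hU : (hM.eigenvectorUnitary : Matrix (Fin m) (Fin m) ℝ) *
      (hM.eigenvectorUnitary : Matrix (Fin m) (Fin m) ℝ)ᴴ = 1 := by
    simpa [Matrix.star_eq_conjTranspose] using
      Matrix.mem_unitaryGroup_iff.mp hM.eigenvectorUnitary.2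
  have hdiag : (diagonal (fun i => hM.eigenvalues i - κ) : Matrix (Fin m) (Fin m) ℝ)
      = diagonal (RCLike.ofReal ∘ hM.eigenvalues) - κ • 1 := by
    rw [Matrix.smul_one_eq_diagonal, ← Matrix.diagonal_sub]
    congr 1
  have key : M - κ • 1 = (hM.eigenvectorUnitary : Matrix (Fin m) (Fin m) ℝ) *
      diagonal (fun i => hM.eigenvalues i - κ) *
      (hM.eigenvectorUnitary : Matrix (Fin m) (Fin m) ℝ)ᴴ := by
    rw [hdiag, Matrix.mul_sub, Matrix.sub_mul, Matrix.mul_smul, mul_one, Matrix.smul_mul, hU]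
    rw [← Matrix.star_eq_conjTranspose]
    rw [← Unitary.conjStarAlgAut_apply (S := ℝ), ← hM.spectral_theorem]
  have hpsd : (M - κ • 1).PosSemidef := by
    rw [key]
    exact (posSemidef_diagonal_iff.mpr fun i => sub_nonneg.mpr (h i)).mul_mul_conjTranspose_same _
  have h2 := hpsd.dotProduct_mulVec_nonneg y
  simp only [star_trivial, Matrix.sub_mulVec, Matrix.smul_mulVec, Matrix.one_mulVec,
    dotProduct_sub, dotProduct_smul, smul_eq_mul] at h2
  linarith


set_option maxHeartbeats 1000000 in
/-- bound on the operator norm of the estimated Lagrangian Hessian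
`H̄ = P̄ + Σᵢ λ̄ᵢ Cᵢ` with `λ̄ = −(G Gᵀ)⁻¹ G ḡ`. -/
theorem stmt_0 {d m : ℕ} (hd : 0 < d) (hm : 0 < m) (hmd : m ≤ d)
    (P Pbar : Matrix (Fin d) (Fin d) ℝ) (C : Fin m → Matrix (Fin d) (Fin d) ℝ)
    (hPsymm : P.IsHermitian) (hPbarsymm : Pbar.IsHermitian)
    (hCsymm : ∀ i, (C i).IsHermitian)
    (g gbar : EuclideanSpace ℝ (Fin d))
    (G : Matrix (Fin m) (Fin d) ℝ)
    (κ₁ L₁ L₂ κf εh εg κh κg Δ Δmax : ℝ)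
    (hκ₁ : 0 < κ₁)
    (hGG : (G * Gᵀ).IsHermitian)
    (heig : ∀ i, κ₁ ≤ hGG.eigenvalues i)
    (hPnorm : ‖P‖ ≤ L₁) (hCnorm : ∀ i, ‖C i‖ ≤ L₂) (hgnorm : ‖g‖ ≤ κf)
    (hεh : 0 ≤ εh) (hεg : 0 ≤ εg) (hκh : 0 ≤ κh) (hκg : 0 ≤ κg)
    (hΔ0 : 0 ≤ Δ) (hΔmax : Δ ≤ Δmax)
    (hPdiff : ‖Pbar - P‖ ≤ εh + κh * Δ)
    (hgdiff : ‖gbar - g‖ ≤ εg + κg * Δ ^ 2)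
    (lam : Fin m → ℝ) (hlam : lam = -(((G * Gᵀ)⁻¹ * G).mulVec gbar))
    (Hbar : Matrix (Fin d) (Fin d) ℝ)
    (hHbar : Hbar = Pbar + ∑ i, lam i • C i) :
    ‖Hbar‖ ≤ εh + κh * Δmax + L₁ +
      Real.sqrt m * L₂ / Real.sqrt κ₁ * (εg + κg * Δmax ^ 2 + κf) := by
  let M : Matrix (Fin m) (Fin m) ℝ := G * Gᵀ
  have hM : M = G * Gᵀ := rfl
  -- invertibility
  have hdet : IsUnit M.det := by
    rw [hGG.det_eq_prod_eigenvalues]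
    refine (Finset.prod_pos fun i _ => lt_of_lt_of_le hκ₁ ?_).ne'.isUnit
    simpa using heig i
  have hMinv : M * M⁻¹ = 1 := Matrix.mul_nonsing_inv _ hdet
  set y : Fin m → ℝ := (M⁻¹ * G) *ᵥ gbar with hy
  have hMy : M *ᵥ y = G *ᵥ (gbar : Fin d → ℝ) := by
    rw [hy, Matrix.mulVec_mulVec, ← Matrix.mul_assoc, hMinv, Matrix.one_mul]
  set w : Fin d → ℝ := Gᵀ *ᵥ y with hw
  have hq1 : y ⬝ᵥ (M *ᵥ y) = w ⬝ᵥ w := by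
    rw [hM, ← Matrix.mulVec_mulVec, dotProduct_mulVec, ← Matrix.mulVec_transpose]
  have hq2 : y ⬝ᵥ (M *ᵥ y) = w ⬝ᵥ (gbar : Fin d → ℝ) := by
    rw [hMy, dotProduct_mulVec, ← Matrix.mulVec_transpose]
  have hww : 0 ≤ w ⬝ᵥ w := Finset.sum_nonneg fun i _ => mul_self_nonneg _
  have hyy : 0 ≤ y ⬝ᵥ y := Finset.sum_nonneg fun i _ => mul_self_nonneg _
  set c : ℝ := (gbar : Fin d → ℝ) ⬝ᵥ (gbar : Fin d → ℝ) with hc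
  have hcnn : 0 ≤ c := Finset.sum_nonneg fun i _ => mul_self_nonneg _
  -- Cauchy-Schwarz
  have hcs : (w ⬝ᵥ (gbar : Fin d → ℝ)) ^ 2 ≤ (w ⬝ᵥ w) * c := by
    have := Finset.sum_mul_sq_le_sq_mul_sq Finset.univ w (gbar : Fin d → ℝ)
    simpa [dotProduct, pow_two, hc] using this
  have hqc : w ⬝ᵥ w ≤ c := by nlinarith [hq1 ▸ hq2 ▸ hcs, hww, hcnn]
  have hkey := aux_psd hGG heig y
  -- so κ₁ * (y⬝y) ≤ c
  have hyc : κ₁ * (y ⬝ᵥ y) ≤ c := by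
    calc κ₁ * (y ⬝ᵥ y) ≤ y ⬝ᵥ (M *ᵥ y) := hkey
    _ = w ⬝ᵥ w := hq1
    _ ≤ c := hqc
  -- sum of abs values
  set S : ℝ := ∑ i, |y i| with hS
  have hSnn : 0 ≤ S := Finset.sum_nonneg fun i _ => abs_nonneg _
  have hS2 : S ^ 2 ≤ m * (y ⬝ᵥ y) := by
    have := sq_sum_le_card_mul_sum_sq (s := Finset.univ) (f := fun i => |y i|)
    simpa [dotProduct, pow_two, abs_mul_abs_self, ← pow_two, sq_abs] using this
  have hcnorm : c = ‖gbar‖ ^ 2 := by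
    rw [EuclideanSpace.norm_eq, Real.sq_sqrt (Finset.sum_nonneg fun i _ => sq_nonneg _)]
    simp [hc, dotProduct, Real.norm_eq_abs, sq_abs, pow_two]
  have hgbar : ‖gbar‖ ≤ εg + κg * Δmax ^ 2 + κf := by
    have h1 : ‖gbar‖ ≤ ‖gbar - g‖ + ‖g‖ := by
      simpa using norm_add_le (gbar - g) g
    have hΔsq : Δ ^ 2 ≤ Δmax ^ 2 := by nlinarith
    nlinarith [mul_le_mul_of_nonneg_left hΔsq hκg]
  set B : ℝ := εg + κg * Δmax ^ 2 + κf with hB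
  have hBnn : 0 ≤ B := le_trans (norm_nonneg gbar) hgbar
  have hcB : c ≤ B ^ 2 := by rw [hcnorm]; exact pow_le_pow_left₀ (norm_nonneg gbar) hgbar 2
  have hSB : S ≤ Real.sqrt m * B / Real.sqrt κ₁ := by
    have hsq : S ^ 2 ≤ (m : ℝ) * B ^ 2 / κ₁ := by
      have h1 : y ⬝ᵥ y ≤ c / κ₁ := by rw [le_div_iff₀ hκ₁]; linarith [hyc]
      have h2 : (m : ℝ) * (y ⬝ᵥ y) ≤ (m : ℝ) * (c / κ₁) :=
        mul_le_mul_of_nonneg_left h1 (Nat.cast_nonneg m)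
      have h3 : (m : ℝ) * (c / κ₁) ≤ (m : ℝ) * (B ^ 2 / κ₁) := by
        apply mul_le_mul_of_nonneg_left _ (Nat.cast_nonneg m)
        gcongr
      calc S ^ 2 ≤ (m : ℝ) * (y ⬝ᵥ y) := hS2
      _ ≤ (m : ℝ) * (B ^ 2 / κ₁) := le_trans h2 h3
      _ = (m : ℝ) * B ^ 2 / κ₁ := by ring
    calc S = Real.sqrt (S ^ 2) := (Real.sqrt_sq hSnn).symm
    _ ≤ Real.sqrt ((m : ℝ) * B ^ 2 / κ₁) := Real.sqrt_le_sqrt hsq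
    _ = Real.sqrt m * B / Real.sqrt κ₁ := by
        rw [Real.sqrt_div (by positivity), Real.sqrt_mul (by positivity), Real.sqrt_sq hBnn]
  have hL2 : 0 ≤ L₂ := le_trans (norm_nonneg (C ⟨0, hm⟩)) (hCnorm ⟨0, hm⟩)
  have hnorm1 : ‖Hbar‖ ≤ ‖Pbar - P‖ + ‖P‖ + S * L₂ := by
    have h0 : Hbar = (Pbar - P) + P + ∑ i, lam i • C i := by rw [hHbar]; abel
    rw [h0]
    have hsum : ‖∑ i, lam i • C i‖ ≤ S * L₂ := by
      refine (norm_sum_le _ _).trans ?_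
      rw [hS, Finset.sum_mul]
      refine Finset.sum_le_sum fun i _ => ?_
      rw [norm_smul, Real.norm_eq_abs, hlam]
      simp only [Pi.neg_apply, abs_neg]
      exact mul_le_mul_of_nonneg_left (hCnorm i) (abs_nonneg _)
    calc ‖Pbar - P + P + ∑ i, lam i • C i‖ ≤ ‖Pbar - P + P‖ + ‖∑ i, lam i • C i‖ :=
          norm_add_le _ _
    _ ≤ (‖Pbar - P‖ + ‖P‖) + S * L₂ := add_le_add (norm_add_le _ _) hsum
  have hΔm : κh * Δ ≤ κh * Δmax := mul_le_mul_of_nonneg_left hΔmax hκh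
  have hfin : S * L₂ ≤ Real.sqrt m * L₂ / Real.sqrt κ₁ * B := by
    calc S * L₂ ≤ (Real.sqrt m * B / Real.sqrt κ₁) * L₂ :=
          mul_le_mul_of_nonneg_right hSB hL2
    _ = Real.sqrt m * L₂ / Real.sqrt κ₁ * B := by ring
  linarith [hnorm1, hPdiff, hΔm, hfin]
end

section
/- Let f : ℝ^d → ℝ be differentiable with gradient ∇f Lipschitz continuous with constant L₁, and let c : ℝ^d → ℝ^m be differentiable with derivative Dc Lipschitz continuous with constant L₂ (in operator norm). Let x, s ∈ ℝ^d, let ḡ ∈ ℝ^d, let H be a symmetric d×d real matrix, and let μ ≥ 0. Define Pred = ḡᵀ s + (1/2) sᵀ H s + μ (‖c(x) + Dc(x) s‖ − ‖c(x)‖) and R = f(x+s) + μ ‖c(x+s)‖ − f(x) − μ ‖c(x)‖. Then |R − Pred| ≤ ‖∇f(x) − ḡ‖ · ‖s‖ + (1/2) (L₁ + ‖H‖ + μ L₂) ‖s‖². -/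
open scoped RealInnerProductSpace

/-- Quadratic Taylor bound for a function with Lipschitz derivative. -/
theorem taylor_quad {E G : Type*} [NormedAddCommGroup E] [NormedSpace ℝ E]
    [NormedAddCommGroup G] [NormedSpace ℝ G] [CompleteSpace G]
    (F : E → G) (hF : Differentiable ℝ F) (L : ℝ)
    (hLip : ∀ a b, ‖fderiv ℝ F a - fderiv ℝ F b‖ ≤ L * ‖a - b‖)
    (x s : E) : ‖F (x + s) - F x - fderiv ℝ F x s‖ ≤ L / 2 * ‖s‖ ^ 2 := by
  rcases eq_or_ne s 0 with rfl | hs0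
  · simp
  have hcontD : Continuous (fderiv ℝ F) := by
    refine (LipschitzWith.of_dist_le' (K := max L 0) fun a b => ?_).continuous
    calc dist (fderiv ℝ F a) (fderiv ℝ F b) = ‖fderiv ℝ F a - fderiv ℝ F b‖ := dist_eq_norm _ _
    _ ≤ L * ‖a - b‖ := hLip a b
    _ ≤ max L 0 * ‖a - b‖ := by
        have := norm_nonneg (a - b); gcongr; exact le_max_left _ _
    _ = max L 0 * dist a b := by rw [dist_eq_norm]
  set ψ : ℝ → G := fun t => fderiv ℝ F (x + t • s) s - fderiv ℝ F x s with hψ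
  have hψc : Continuous ψ := by
    apply Continuous.sub _ continuous_const
    exact (ContinuousLinearMap.apply ℝ G s).continuous.comp
      (hcontD.comp (continuous_const.add (continuous_id.smul continuous_const)))
  have hderiv : ∀ t ∈ Set.uIcc (0:ℝ) 1,
      HasDerivAt (fun t : ℝ => F (x + t • s) - t • fderiv ℝ F x s) (ψ t) t := by
    intro t _
    have h1 : HasDerivAt (fun t : ℝ => F (x + t • s)) (fderiv ℝ F (x + t • s) s) t := by
      have hline : HasDerivAt (fun t : ℝ => x + t • s) s t := by
        simpa using ((hasDerivAt_id t).smul_const s).const_add x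
      exact ((hF (x + t • s)).hasFDerivAt.comp_hasDerivAt t hline)
    have h2 : HasDerivAt (fun t : ℝ => t • fderiv ℝ F x s) (fderiv ℝ F x s) t := by
      simpa using (hasDerivAt_id t).smul_const (fderiv ℝ F x s)
    exact h1.sub h2
  have hint : IntervalIntegrable ψ MeasureTheory.volume 0 1 :=
    hψc.intervalIntegrable _ _
  have key : F (x + s) - F x - fderiv ℝ F x s = ∫ t in (0:ℝ)..1, ψ t := by
    have := intervalIntegral.integral_eq_sub_of_hasDerivAt hderiv hint
    rw [this]; simp; abel
  rw [key]
  have hbound : ∀ t ∈ Set.Icc (0:ℝ) 1, ‖ψ t‖ ≤ (L * ‖s‖ ^ 2) * t := by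
    intro t ht
    calc ‖ψ t‖ = ‖(fderiv ℝ F (x + t • s) - fderiv ℝ F x) s‖ := by simp [hψ]
    _ ≤ ‖fderiv ℝ F (x + t • s) - fderiv ℝ F x‖ * ‖s‖ :=
        ContinuousLinearMap.le_opNorm _ _
    _ ≤ (L * ‖(x + t • s) - x‖) * ‖s‖ :=
        mul_le_mul_of_nonneg_right (hLip _ _) (norm_nonneg s)
    _ = (L * ‖s‖ ^ 2) * t := by
        simp [norm_smul, abs_of_nonneg ht.1]; ring
  have hL : 0 ≤ L := by
    have h1 := hLip x (x + s)
    have h2 : (0:ℝ) < ‖x - (x + s)‖ := by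
      simpa [sub_eq_zero, norm_sub_rev] using norm_pos_iff.2 hs0
    nlinarith [norm_nonneg (fderiv ℝ F x - fderiv ℝ F (x + s)), h1]
  calc ‖∫ t in (0:ℝ)..1, ψ t‖ ≤ |∫ t in (0:ℝ)..1, (L * ‖s‖ ^ 2) * t| := by
        apply intervalIntegral.norm_integral_le_abs_of_norm_le
        · rw [Set.uIoc_of_le (by norm_num : (0:ℝ) ≤ 1)]
          exact (MeasureTheory.ae_restrict_iff' measurableSet_Ioc).2
            (Filter.Eventually.of_forall fun t ht =>
              hbound t ⟨le_of_lt ht.1, ht.2⟩)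
        · exact (continuous_const.mul continuous_id).intervalIntegrable _ _
  _ = L / 2 * ‖s‖ ^ 2 := by
        rw [intervalIntegral.integral_const_mul, integral_id,
          abs_of_nonneg (by positivity)]; ring

open Matrix
open scoped Matrix.Norms.L2Operator

/-- difference between the actual reduction of the merit function and
the predicted model reduction. -/
theorem stmt_3 {d m : ℕ}
    (f : EuclideanSpace ℝ (Fin d) → ℝ)
    (c : EuclideanSpace ℝ (Fin d) → EuclideanSpace ℝ (Fin m))
    (L₁ L₂ : ℝ)
    (hf : Differentiable ℝ f)
    (hgradLip : ∀ x y, ‖gradient f x - gradient f y‖ ≤ L₁ * ‖x - y‖)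
    (hc : Differentiable ℝ c)
    (hDcLip : ∀ x y, ‖fderiv ℝ c x - fderiv ℝ c y‖ ≤ L₂ * ‖x - y‖)
    (x s gbar : EuclideanSpace ℝ (Fin d))
    (H : Matrix (Fin d) (Fin d) ℝ) (hH : H.IsHermitian)
    (μ : ℝ) (hμ : 0 ≤ μ)
    (Pred R : ℝ)
    (hPred : Pred = gbar ⬝ᵥ s + (1 / 2) * (s ⬝ᵥ H.mulVec s)
      + μ * (‖c x + fderiv ℝ c x s‖ - ‖c x‖))
    (hR : R = f (x + s) + μ * ‖c (x + s)‖ - f x - μ * ‖c x‖) :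
    |R - Pred| ≤ ‖gradient f x - gbar‖ * ‖s‖ + (1 / 2) * (L₁ + ‖H‖ + μ * L₂) * ‖s‖ ^ 2 := by
  have hfd : ∀ a, fderiv ℝ f a
      = InnerProductSpace.toDual ℝ (EuclideanSpace ℝ (Fin d)) (gradient f a) := fun a =>
    ((InnerProductSpace.toDual ℝ _).apply_symm_apply _).symm
  have hfLip : ∀ a b, ‖fderiv ℝ f a - fderiv ℝ f b‖ ≤ L₁ * ‖a - b‖ := fun a b => by
    rw [hfd, hfd, ← map_sub, (InnerProductSpace.toDual ℝ _).norm_map]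
    exact hgradLip a b
  have hA := taylor_quad f hf L₁ hfLip x s
  rw [Real.norm_eq_abs] at hA
  have hB := taylor_quad c hc L₂ hDcLip x s
  have hD : fderiv ℝ f x s = ⟪gradient f x, s⟫ := by
    rw [hfd]; simp [InnerProductSpace.toDual_apply_apply]
  have hE : gbar ⬝ᵥ s = ⟪gbar, s⟫ := by
    simp [dotProduct, PiLp.inner_apply, RCLike.inner_apply, conj_trivial]
    exact Finset.sum_congr rfl fun i _ => mul_comm _ _
  have hF : |⟪gradient f x - gbar, s⟫| ≤ ‖gradient f x - gbar‖ * ‖s‖ :=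
    abs_real_inner_le_norm _ _
  have hHv : ‖(EuclideanSpace.equiv (Fin d) ℝ).symm (H *ᵥ s)‖ ≤ ‖H‖ * ‖s‖ :=
    Matrix.l2_opNorm_mulVec H s
  have hGeq : s ⬝ᵥ H.mulVec s = ⟪s, (EuclideanSpace.equiv (Fin d) ℝ).symm (H *ᵥ s)⟫ := by
    simp [dotProduct, PiLp.inner_apply, RCLike.inner_apply, conj_trivial, Matrix.mulVec]
    exact Finset.sum_congr rfl fun i _ => mul_comm _ _
  have hG : |s ⬝ᵥ H.mulVec s| ≤ ‖H‖ * ‖s‖ ^ 2 := by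
    rw [hGeq]
    calc |⟪s, (EuclideanSpace.equiv (Fin d) ℝ).symm (H *ᵥ s)⟫|
        ≤ ‖s‖ * ‖(EuclideanSpace.equiv (Fin d) ℝ).symm (H *ᵥ s)‖ := abs_real_inner_le_norm _ _
      _ ≤ ‖s‖ * (‖H‖ * ‖s‖) := mul_le_mul_of_nonneg_left hHv (norm_nonneg s)
      _ = ‖H‖ * ‖s‖ ^ 2 := by ring
  have hC : |‖c (x + s)‖ - ‖c x + fderiv ℝ c x s‖| ≤ L₂ / 2 * ‖s‖ ^ 2 := by
    refine le_trans (abs_norm_sub_norm_le _ _) ?_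
    have : c (x + s) - (c x + fderiv ℝ c x s) = c (x + s) - c x - fderiv ℝ c x s := by abel
    rw [this]; exact hB
  have key : R - Pred = (f (x + s) - f x - fderiv ℝ f x s)
      + ⟪gradient f x - gbar, s⟫ - (1 / 2) * (s ⬝ᵥ H.mulVec s)
      + μ * (‖c (x + s)‖ - ‖c x + fderiv ℝ c x s‖) := by
    rw [hPred, hR, inner_sub_left, ← hD, ← hE]; ring
  have tri : |R - Pred| ≤ |f (x + s) - f x - fderiv ℝ f x s|
      + |⟪gradient f x - gbar, s⟫| + (1 / 2) * |s ⬝ᵥ H.mulVec s|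
      + μ * |‖c (x + s)‖ - ‖c x + fderiv ℝ c x s‖| := by
    rw [key]
    have h1 := abs_add_le (f (x + s) - f x - fderiv ℝ f x s
      + ⟪gradient f x - gbar, s⟫ - (1 / 2) * (s ⬝ᵥ H.mulVec s))
      (μ * (‖c (x + s)‖ - ‖c x + fderiv ℝ c x s‖))
    have h2 := abs_sub (f (x + s) - f x - fderiv ℝ f x s
      + ⟪gradient f x - gbar, s⟫) ((1 / 2) * (s ⬝ᵥ H.mulVec s))
    have h3 := abs_add_le (f (x + s) - f x - fderiv ℝ f x s) ⟪gradient f x - gbar, s⟫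
    have h4 : |μ * (‖c (x + s)‖ - ‖c x + fderiv ℝ c x s‖)|
        = μ * |‖c (x + s)‖ - ‖c x + fderiv ℝ c x s‖| := by
      rw [abs_mul, abs_of_nonneg hμ]
    have h5 : |(1 / 2 : ℝ) * (s ⬝ᵥ H.mulVec s)| = (1 / 2) * |s ⬝ᵥ H.mulVec s| := by
      rw [abs_mul]; norm_num
    linarith
  have hμC : μ * |‖c (x + s)‖ - ‖c x + fderiv ℝ c x s‖| ≤ μ * (L₂ / 2 * ‖s‖ ^ 2) :=
    mul_le_mul_of_nonneg_left hC hμ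
  nlinarith [hA, hF, hG, tri, hμC]
end

section
/- Let c : ℝ^d → ℝ^m be differentiable with derivative Dc Lipschitz continuous with constant L₂ (in operator norm). Let x, s ∈ ℝ^d, set G = Dc(x) (an m×d matrix), and assume the smallest eigenvalue of G Gᵀ is at least κ₁ > 0. Define the second-order correction step d_c = −Gᵀ (G Gᵀ)⁻¹ (c(x+s) − c(x) − G s). Then ‖d_c‖ ≤ (L₂ / √κ₁) · ‖s‖². -/
open Matrix
open scoped Matrix.Norms.L2Operator

open scoped RealInnerProductSpace

lemma quad_lower {m : ℕ} {A : Matrix (Fin m) (Fin m) ℝ} (hA : A.IsHermitian)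
    {κ : ℝ} (heig : ∀ i, κ ≤ hA.eigenvalues i) (u : EuclideanSpace ℝ (Fin m)) :
    κ * ⟪u, u⟫ ≤ ⟪u, (Matrix.toEuclideanLin A) u⟫ := by
  set b := hA.eigenvectorBasis with hb
  have hsym : (Matrix.toEuclideanLin A).IsSymmetric :=
    Matrix.isHermitian_iff_isSymmetric.1 hA
  have hTb : ∀ j, (Matrix.toEuclideanLin A) (b j) = hA.eigenvalues j • b j := by
    intro j
    have := hA.mulVec_eigenvectorBasis j
    apply (WithLp.equiv 2 (Fin m → ℝ)).symm_apply_eq.mpr ?_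
    ext i
    simpa [Matrix.toEuclideanLin_apply] using congrFun this i
  have key : ⟪u, (Matrix.toEuclideanLin A) u⟫
      = ∑ i, hA.eigenvalues i * (⟪u, b i⟫)^2 := by
    rw [← b.sum_inner_mul_inner u ((Matrix.toEuclideanLin A) u)]
    refine Finset.sum_congr rfl fun i _ => ?_
    rw [← hsym (b i) u, hTb i, inner_smul_left]
    simp [real_inner_comm (b i) u, sq]
    ring
  have key2 : ⟪u, u⟫ = ∑ i, (⟪u, b i⟫)^2 := by
    rw [← b.sum_inner_mul_inner u u]
    refine Finset.sum_congr rfl fun i _ => ?_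
    rw [real_inner_comm (b i) u, sq]
  rw [key, key2, Finset.mul_sum]
  refine Finset.sum_le_sum fun i _ => ?_
  exact mul_le_mul_of_nonneg_right (heig i) (sq_nonneg _)

lemma op_lower {m : ℕ} {A : Matrix (Fin m) (Fin m) ℝ} (hA : A.IsHermitian)
    {κ : ℝ} (hκ : 0 < κ) (heig : ∀ i, κ ≤ hA.eigenvalues i) (u : EuclideanSpace ℝ (Fin m)) :
    κ * ‖u‖ ≤ ‖(Matrix.toEuclideanLin A) u‖ := by
  have h1 := quad_lower hA heig u
  have h2 := real_inner_le_norm u ((Matrix.toEuclideanLin A) u)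
  rw [real_inner_self_eq_norm_sq] at h1
  rcases eq_or_ne u 0 with h | h
  · simp [h]
  · have hu : 0 < ‖u‖ := norm_pos_iff.mpr h
    nlinarith [norm_nonneg ((Matrix.toEuclideanLin A) u)]

lemma step_bound {m d : ℕ} (G : Matrix (Fin m) (Fin d) ℝ) {κ : ℝ} (hκ : 0 < κ)
    (hGG : (G * Gᵀ).IsHermitian) (heig : ∀ i, κ ≤ hGG.eigenvalues i)
    (r : EuclideanSpace ℝ (Fin m)) :
    ‖(WithLp.equiv 2 (Fin d → ℝ)).symm ((Gᵀ * (G * Gᵀ)⁻¹).mulVec ((WithLp.equiv 2 (Fin m → ℝ)) r))‖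
      ≤ ‖r‖ / Real.sqrt κ := by
  set A := G * Gᵀ with hA
  have hdet : 0 < A.det := by
    have h := hGG.det_eq_prod_eigenvalues
    have : A.det = ∏ i, hGG.eigenvalues i := by simpa using h
    rw [this]
    exact Finset.prod_pos fun i _ => hκ.trans_le (heig i)
  have hinv : A * A⁻¹ = 1 := Matrix.mul_nonsing_inv _ (isUnit_iff_ne_zero.mpr hdet.ne')
  set r' : Fin m → ℝ := (WithLp.equiv 2 (Fin m → ℝ)) r with hr'
  set w : EuclideanSpace ℝ (Fin m) := (WithLp.equiv 2 (Fin m → ℝ)).symm (A⁻¹ *ᵥ r') with hw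
  have hTw : (Matrix.toEuclideanLin A) w = r := by
    simp only [hw, Matrix.toEuclideanLin_apply, Equiv.apply_symm_apply,
      Matrix.mulVec_mulVec, hinv, Matrix.one_mulVec]
    simp [hr', Matrix.mulVec_mulVec, hinv]
  have hwle : κ * ‖w‖ ≤ ‖r‖ := by simpa [hTw] using op_lower hGG hκ heig w
  set y : EuclideanSpace ℝ (Fin d) :=
    (WithLp.equiv 2 (Fin d → ℝ)).symm ((Gᵀ * A⁻¹).mulVec r') with hy
  have hdot : ∀ (a b : Fin m → ℝ),
      ⟪(WithLp.equiv 2 (Fin m → ℝ)).symm a, (WithLp.equiv 2 (Fin m → ℝ)).symm b⟫ = a ⬝ᵥ b := by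
    intro a b
    simp [PiLp.inner_apply, dotProduct, RCLike.inner_apply, conj_trivial, mul_comm]
  have hdotd : ∀ (a b : Fin d → ℝ),
      ⟪(WithLp.equiv 2 (Fin d → ℝ)).symm a, (WithLp.equiv 2 (Fin d → ℝ)).symm b⟫ = a ⬝ᵥ b := by
    intro a b
    simp [PiLp.inner_apply, dotProduct, RCLike.inner_apply, conj_trivial, mul_comm]
  have hysq : ‖y‖ ^ 2 = ((WithLp.equiv 2 (Fin m → ℝ)) w) ⬝ᵥ (A *ᵥ ((WithLp.equiv 2 (Fin m → ℝ)) w)) := by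
    set w' := (WithLp.equiv 2 (Fin m → ℝ)) w with hw'
    have h1 : y = (WithLp.equiv 2 (Fin d → ℝ)).symm (Gᵀ *ᵥ w') := by
      simp [hy, hw', hw, ← Matrix.mulVec_mulVec]
    rw [← real_inner_self_eq_norm_sq, h1, hdotd]
    nth_rewrite 1 [Matrix.mulVec_transpose]
    rw [← Matrix.dotProduct_mulVec, Matrix.mulVec_mulVec, ← hA]
  have hquad : ((WithLp.equiv 2 (Fin m → ℝ)) w) ⬝ᵥ (A *ᵥ ((WithLp.equiv 2 (Fin m → ℝ)) w)) = ⟪w, r⟫ := by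
    rw [← hTw]
    rw [Matrix.toEuclideanLin_apply, ← hdot]
    rw [Equiv.symm_apply_apply]
    rfl
  have hy2 : ‖y‖ ^ 2 ≤ ‖r‖ ^ 2 / κ := by
    rw [hysq, hquad]
    have h2 := real_inner_le_norm w r
    have h3 : ‖w‖ ≤ ‖r‖ / κ := by
      rw [le_div_iff₀ hκ]; linarith [hwle]
    calc ⟪w, r⟫ ≤ ‖w‖ * ‖r‖ := h2
      _ ≤ (‖r‖ / κ) * ‖r‖ := mul_le_mul_of_nonneg_right h3 (norm_nonneg r)
      _ = ‖r‖ ^ 2 / κ := by ring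
  have h5 : ‖y‖ ≤ Real.sqrt (‖r‖ ^ 2 / κ) := by
    rw [← Real.sqrt_sq (norm_nonneg y)]
    exact Real.sqrt_le_sqrt hy2
  calc ‖y‖ ≤ Real.sqrt (‖r‖ ^ 2 / κ) := h5
    _ = ‖r‖ / Real.sqrt κ := by
        rw [Real.sqrt_div (sq_nonneg _), Real.sqrt_sq (norm_nonneg r)]

/-- bound on the norm of the second-order correction step
`d_c = −Gᵀ (G Gᵀ)⁻¹ (c(x+s) − c(x) − G s)` where `G` is the Jacobian of `c` at `x`. -/
theorem stmt_4 {d m : ℕ}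
    (c : EuclideanSpace ℝ (Fin d) → EuclideanSpace ℝ (Fin m))
    (L₂ : ℝ)
    (hc : Differentiable ℝ c)
    (hDcLip : ∀ x y, ‖fderiv ℝ c x - fderiv ℝ c y‖ ≤ L₂ * ‖x - y‖)
    (x s : EuclideanSpace ℝ (Fin d))
    (G : Matrix (Fin m) (Fin d) ℝ)
    (hG : ∀ v : EuclideanSpace ℝ (Fin d), G.mulVec v = fderiv ℝ c x v)
    (κ₁ : ℝ) (hκ₁ : 0 < κ₁)
    (hGG : (G * Gᵀ).IsHermitian)
    (heig : ∀ i, κ₁ ≤ hGG.eigenvalues i)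
    (dc : EuclideanSpace ℝ (Fin d))
    (hdc : dc = -((Gᵀ * (G * Gᵀ)⁻¹).mulVec (c (x + s) - c x - (WithLp.equiv 2 (Fin m → ℝ)).symm (G.mulVec s)))) :
    ‖dc‖ ≤ L₂ / Real.sqrt κ₁ * ‖s‖ ^ 2 := by
  set r : EuclideanSpace ℝ (Fin m) :=
    c (x + s) - c x - (WithLp.equiv 2 (Fin m → ℝ)).symm (G.mulVec s) with hrdef
  have hGs : (WithLp.equiv 2 (Fin m → ℝ)).symm (G.mulVec s) = fderiv ℝ c x s := by rw [hG s]; rfl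
  have hdc' : dc = WithLp.toLp 2 (-((Gᵀ * (G * Gᵀ)⁻¹).mulVec r.ofLp)) := by
    rw [← WithLp.toLp_ofLp (x := dc), hdc]; rfl
  rcases eq_or_ne s 0 with hs0 | hs0
  · have hr0 : r = 0 := by
      rw [hrdef, hGs, hs0]
      simp
    have : dc = 0 := by
      rw [hdc', hr0]
      show WithLp.toLp 2 (-((Gᵀ * (G * Gᵀ)⁻¹).mulVec 0)) = (0 : EuclideanSpace ℝ (Fin d))
      rw [Matrix.mulVec_zero]
      simp
    rw [this, hs0]
    simp
  · have hspos : 0 < ‖s‖ := norm_pos_iff.mpr hs0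
    have hL : 0 ≤ L₂ := by
      have h0 := (norm_nonneg (fderiv ℝ c s - fderiv ℝ c 0)).trans (hDcLip s 0)
      rw [sub_zero] at h0
      exact le_of_mul_le_mul_right (by linarith) hspos
    -- Taylor / mean value bound on ‖r‖
    have bound : ∀ z ∈ segment ℝ x (x + s),
        ‖fderiv ℝ c z - fderiv ℝ c x‖ ≤ L₂ * ‖s‖ := by
      intro z hz
      obtain ⟨a, b, ha, hb, hab, rfl⟩ := hz
      have hzx : a • x + b • (x + s) - x = b • s := by
        rw [smul_add, ← add_assoc, ← add_smul, hab, one_smul, add_sub_cancel_left]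
      calc ‖fderiv ℝ c (a • x + b • (x + s)) - fderiv ℝ c x‖
          ≤ L₂ * ‖a • x + b • (x + s) - x‖ := hDcLip _ _
        _ = L₂ * (b * ‖s‖) := by rw [hzx, norm_smul, Real.norm_eq_abs, abs_of_nonneg hb]
        _ ≤ L₂ * ‖s‖ := by
            apply mul_le_mul_of_nonneg_left _ hL
            nlinarith [hspos]
    have key := (convex_segment x (x + s)).norm_image_sub_le_of_norm_fderiv_le'
      (fun z _ => hc.differentiableAt) bound (left_mem_segment ℝ x (x + s))
      (right_mem_segment ℝ x (x + s))
    rw [add_sub_cancel_left] at key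
    have hr : ‖r‖ ≤ L₂ * ‖s‖ * ‖s‖ := by
      rw [hrdef, hGs]
      exact key
    have hb := step_bound G hκ₁ hGG heig r
    calc ‖dc‖ = ‖(WithLp.equiv 2 (Fin d → ℝ)).symm
          ((Gᵀ * (G * Gᵀ)⁻¹).mulVec ((WithLp.equiv 2 (Fin m → ℝ)) r))‖ := by
          rw [hdc', WithLp.toLp_neg, norm_neg]
          rfl
      _ ≤ ‖r‖ / Real.sqrt κ₁ := hb
      _ ≤ (L₂ * ‖s‖ * ‖s‖) / Real.sqrt κ₁ := by
          gcongr
      _ = L₂ / Real.sqrt κ₁ * ‖s‖ ^ 2 := by ring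
end

section
/- Let η ∈ (0,1), κ ∈ (0,1], θ ≥ 0, Δ > 0, Δ_max ≥ Δ, and let N ≥ 0, h > 0, τ ≥ 0, w ≥ 0 and Ared, Pred be real numbers. Assume Ared − θ ≤ η · Pred and max{ N / max{1, h}, τ } ≥ η Δ. Then: (i) if Pred ≤ −(κ/2) · N · min{ Δ, N/h } and τ = 0, then Ared ≤ −(κ/2) η³ Δ² + θ; and (ii) if Pred ≤ −(κ/2) · max{ N · min{ Δ, N/h }, τ Δ (Δ + w) }, then Ared ≤ −(κ η³ / (2 max{Δ_max, 1})) Δ³ + θ. -/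
private lemma stmt6_aux1 (κ η Δ M : ℝ) (hκ : 0 < κ) (hη : 0 < η) (hΔ : 0 < Δ)
    (hM : Δ ≤ M) : κ * η ^ 3 / (2 * M) * Δ ^ 3 ≤ κ / 2 * η ^ 3 * Δ ^ 2 := by
  have hMpos : 0 < 2 * M := by linarith
  rw [div_mul_eq_mul_div, div_le_iff₀ hMpos]
  nlinarith [mul_nonneg (sub_nonneg.mpr hM) (by positivity : (0:ℝ) ≤ κ * η ^ 3 * Δ ^ 2)]

private lemma stmt6_aux2 (κ η Δ M : ℝ) (hκ : 0 < κ) (hη : 0 < η) (hΔ : 0 < Δ)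
    (hM : η ≤ M) (hM1 : 1 ≤ M) : κ * η ^ 3 / (2 * M) * Δ ^ 3 ≤ κ / 2 * η ^ 2 * Δ ^ 3 := by
  have hMpos : 0 < 2 * M := by linarith
  rw [div_mul_eq_mul_div, div_le_iff₀ hMpos]
  nlinarith [mul_nonneg (sub_nonneg.mpr hM) (by positivity : (0:ℝ) ≤ κ * η ^ 2 * Δ ^ 3)]


set_option maxHeartbeats 1000000 in
/-- arithmetic content of the sufficient-decrease lemma for the
trust-region method. -/
theorem stmt_6 (η κ θ Δ Δmax N h τ w Ared Pred : ℝ)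
    (hη : η ∈ Set.Ioo (0 : ℝ) 1) (hκ : κ ∈ Set.Ioc (0 : ℝ) 1)
    (hθ : 0 ≤ θ) (hΔ : 0 < Δ) (hΔmax : Δ ≤ Δmax)
    (hN : 0 ≤ N) (hh : 0 < h) (hτ : 0 ≤ τ) (hw : 0 ≤ w)
    (hared : Ared - θ ≤ η * Pred)
    (hcond : η * Δ ≤ max (N / max 1 h) τ) :
    ((Pred ≤ -(κ / 2) * (N * min Δ (N / h)) ∧ τ = 0) →
        Ared ≤ -(κ / 2) * η ^ 3 * Δ ^ 2 + θ) ∧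
    ((Pred ≤ -(κ / 2) * max (N * min Δ (N / h)) (τ * Δ * (Δ + w))) →
        Ared ≤ -(κ * η ^ 3 / (2 * max Δmax 1)) * Δ ^ 3 + θ) := by
  obtain ⟨hη0, hη1⟩ := hη
  obtain ⟨hκ0, hκ1⟩ := hκ
  have hM1 : (1:ℝ) ≤ max 1 h := le_max_left _ _
  have hMpos : (0:ℝ) < max 1 h := lt_of_lt_of_le one_pos hM1
  have hηΔ : 0 < η * Δ := mul_pos hη0 hΔ
  have hM'1 : (1:ℝ) ≤ max Δmax 1 := le_max_right _ _
  have hM'Δ : Δ ≤ max Δmax 1 := le_trans hΔmax (le_max_left _ _)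
  have hM'pos : (0:ℝ) < 2 * max Δmax 1 := by linarith
  -- key : if the normalized residual is large, so is the Cauchy-like term
  have keyA : η * Δ ≤ N / max 1 h → η ^ 2 * Δ ^ 2 ≤ N * min Δ (N / h) := by
    intro hle
    have hN1 : η * Δ * max 1 h ≤ N := (le_div_iff₀ hMpos).mp hle
    have hN2 : η * Δ ≤ N := le_trans (by nlinarith) hN1
    have hNh : η * Δ ≤ N / h := by
      rw [le_div_iff₀ hh]
      have hhM : h ≤ max 1 h := le_max_right _ _
      nlinarith
    have hmin : η * Δ ≤ min Δ (N / h) := le_min (by nlinarith) hNh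
    nlinarith
  constructor
  · rintro ⟨hP, hτ0⟩
    subst hτ0
    have h1 : η * Δ ≤ N / max 1 h := by
      rcases le_max_iff.mp hcond with h' | h'
      · exact h'
      · linarith
    have h2 := keyA h1
    have h3 : Pred ≤ -(κ / 2) * (η ^ 2 * Δ ^ 2) := le_trans hP (by nlinarith)
    nlinarith
  · intro hP
    rcases le_max_iff.mp hcond with h1 | h1
    · have h2 := keyA h1
      have h3 : N * min Δ (N / h) ≤ max (N * min Δ (N / h)) (τ * Δ * (Δ + w)) :=
        le_max_left _ _
      have h4 : Pred ≤ -(κ / 2) * (η ^ 2 * Δ ^ 2) := le_trans hP (by nlinarith)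
      have hkey : κ * η ^ 3 / (2 * max Δmax 1) * Δ ^ 3 ≤ κ / 2 * η ^ 3 * Δ ^ 2 :=
        stmt6_aux1 κ η Δ _ hκ0 hη0 hΔ hM'Δ
      have h5 : η * Pred ≤ -(κ / 2 * η ^ 3 * Δ ^ 2) := by
        calc η * Pred ≤ η * (-(κ / 2) * (η ^ 2 * Δ ^ 2)) :=
              mul_le_mul_of_nonneg_left h4 hη0.le
          _ = -(κ / 2 * η ^ 3 * Δ ^ 2) := by ring
      linarith
    · have h2 : η * Δ ^ 3 ≤ τ * Δ * (Δ + w) := by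
        nlinarith [mul_nonneg (mul_nonneg hτ hΔ.le) hw,
          mul_le_mul_of_nonneg_right h1 (mul_nonneg hΔ.le hΔ.le)]
      have h3 : τ * Δ * (Δ + w) ≤ max (N * min Δ (N / h)) (τ * Δ * (Δ + w)) :=
        le_max_right _ _
      have h6 : η * Δ ^ 3 ≤ max (N * min Δ (N / h)) (τ * Δ * (Δ + w)) := le_trans h2 h3
      have h4 : Pred ≤ -(κ / 2) * (η * Δ ^ 3) := by
        have h7 := mul_le_mul_of_nonneg_left h6 (by positivity : (0:ℝ) ≤ κ / 2)
        linarith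
      have hkey : κ * η ^ 3 / (2 * max Δmax 1) * Δ ^ 3 ≤ κ / 2 * η ^ 2 * Δ ^ 3 :=
        stmt6_aux2 κ η Δ _ hκ0 hη0 hΔ (by linarith) hM'1
      have h5 : η * Pred ≤ -(κ / 2 * η ^ 2 * Δ ^ 3) := by
        calc η * Pred ≤ η * (-(κ / 2) * (η * Δ ^ 3)) :=
              mul_le_mul_of_nonneg_left h4 hη0.le
          _ = -(κ / 2 * η ^ 2 * Δ ^ 3) := by ring
      linarith only [hared, h5, hkey]
end

section
/- Fix γ > 1, Δ_max > 0, an integer l ≥ 1, and set Δ̂' = γ^{−l} Δ_max. Let Θ : ℕ → {0,1} and define the sequence (Δ_k) by Δ_0 = Δ_max and, for every k ≥ 0, Δ_{k+1} = min(γ Δ_k, Δ_max) if Θ_k = 1 and Δ_{k+1} = Δ_k / γ if Θ_k = 0. Define Λ_k = 1 if min(Δ_k, Δ_{k+1}) ≥ Δ̂' and Λ_k = 0 otherwise. Then for every T ≥ 1: Σ_{k=0}^{T−1} Λ_k Θ_k ≥ Σ_{k=0}^{T−1} Λ_k (1 − Θ_k) − l. -/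
def expSeq (Θ : ℕ → Bool) : ℕ → ℤ
  | 0 => 0
  | k+1 => if Θ k then min (expSeq Θ k + 1) 0 else expSeq Θ k - 1

lemma expSeq_nonpos (Θ : ℕ → Bool) : ∀ k, expSeq Θ k ≤ 0
  | 0 => le_refl 0
  | k+1 => by
    have := expSeq_nonpos Θ k
    simp only [expSeq]
    split <;> omega

lemma delta_eq (γ Δmax : ℝ) (hγ : 1 < γ) (hΔmax : 0 < Δmax)
    (Θ : ℕ → Bool) (Δ : ℕ → ℝ) (hΔ0 : Δ 0 = Δmax)
    (hΔrec : ∀ k, Δ (k + 1) = if Θ k then min (γ * Δ k) Δmax else Δ k / γ) :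
    ∀ k, Δ k = γ ^ (expSeq Θ k) * Δmax := by
  have hγ0 : (0:ℝ) < γ := lt_trans one_pos hγ
  have hmono : Monotone (fun n : ℤ => γ ^ n * Δmax) := fun a b hab =>
    mul_le_mul_of_nonneg_right (zpow_le_zpow_right₀ hγ.le hab) hΔmax.le
  intro k
  induction k with
  | zero => simp [expSeq, hΔ0]
  | succ k ih =>
    rw [hΔrec k]
    by_cases h : Θ k
    · have h1 : γ * (γ ^ expSeq Θ k * Δmax) = γ ^ (expSeq Θ k + 1) * Δmax := by
        rw [zpow_add_one₀ (ne_of_gt hγ0)]; ring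
      have h2 : Δmax = γ ^ (0:ℤ) * Δmax := by simp
      simp only [h, if_true, expSeq, ih]
      rw [h1]
      nth_rewrite 2 [h2]
      exact (hmono.map_min).symm
    · have h' : Θ k = false := by simpa using h
      simp only [h', Bool.false_eq_true, if_false, expSeq, ih]
      rw [zpow_sub_one₀ (ne_of_gt hγ0)]
      field_simp

/-- among the first `T` iterations of the trust-region radius update,
the number of large-and-sufficient iterations is at least the number of
large-and-insufficient iterations minus `l = log_γ(Δ₀/Δ̂')`. -/
theorem stmt_7 (γ Δmax : ℝ) (hγ : 1 < γ) (hΔmax : 0 < Δmax)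
    (l : ℕ) (hl : 1 ≤ l)
    (Θ Λ : ℕ → Bool) (Δ : ℕ → ℝ)
    (hΔ0 : Δ 0 = Δmax)
    (hΔrec : ∀ k, Δ (k + 1) = if Θ k then min (γ * Δ k) Δmax else Δ k / γ)
    (hΛ : ∀ k, Λ k = true ↔ γ ^ (-(l : ℤ)) * Δmax ≤ min (Δ k) (Δ (k + 1)))
    (T : ℕ) (hT : 1 ≤ T) :
    ∑ k ∈ Finset.range T,
        (if Λ k then (1 : ℝ) else 0) * (if Θ k then (1 : ℝ) else 0)
      ≥ (∑ k ∈ Finset.range T,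
          (if Λ k then (1 : ℝ) else 0) * (1 - if Θ k then (1 : ℝ) else 0)) - l := by
  have hγ0 : (0:ℝ) < γ := lt_trans one_pos hγ
  set e : ℕ → ℤ := expSeq Θ with he
  have hΔe : ∀ k, Δ k = γ ^ (e k) * Δmax :=
    delta_eq γ Δmax hγ hΔmax Θ Δ hΔ0 hΔrec
  -- translate Λ to integer condition
  have hΛ' : ∀ k, Λ k = true ↔ -(l:ℤ) ≤ min (e k) (e (k+1)) := by
    intro k
    rw [hΛ k, hΔe k, hΔe (k+1)]
    have hmono : Monotone (fun n : ℤ => γ ^ n * Δmax) := fun a b hab =>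
      mul_le_mul_of_nonneg_right (zpow_le_zpow_right₀ hγ.le hab) hΔmax.le
    rw [← hmono.map_min]
    constructor
    · intro h
      have := le_of_mul_le_mul_right h hΔmax
      exact le_of_not_gt fun hc => absurd this (not_le.mpr
        (by exact zpow_lt_zpow_right₀ hγ hc))
    · intro h
      exact mul_le_mul_of_nonneg_right (zpow_le_zpow_right₀ hγ.le h) hΔmax.le
  -- exponent recurrence facts
  have herec : ∀ k, e (k+1) = if Θ k then min (e k + 1) 0 else e k - 1 := by
    intro k; simp [he, expSeq]
  have henp : ∀ k, e k ≤ 0 := expSeq_nonpos Θ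
  -- key induction
  have key : ∀ N, (∑ k ∈ Finset.range N,
      ((if Λ k then (1 : ℝ) else 0) * (if Θ k then (1 : ℝ) else 0)
        - (if Λ k then (1 : ℝ) else 0) * (1 - if Θ k then (1 : ℝ) else 0)))
      ≥ (max (e N) (-(l:ℤ)) : ℤ) := by
    intro N
    induction N with
    | zero =>
      simp only [Finset.range_zero, Finset.sum_empty]
      have : max (e 0) (-(l:ℤ)) = 0 := by
        have : e 0 = 0 := rfl
        omega
      rw [this]; norm_num
    | succ N ih =>
      rw [Finset.sum_range_succ]
      have hrec := herec N
      have hnp := henp N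
      have hnp' := henp (N+1)
      by_cases hL : Λ N = true
      · have hLc := (hΛ' N).mp hL
        by_cases hTh : Θ N = true
        · -- term = 1
          have : max (e (N+1)) (-(l:ℤ)) ≤ max (e N) (-(l:ℤ)) + 1 := by
            rw [hTh] at hrec; simp at hrec; omega
          have hcast : ((max (e (N+1)) (-(l:ℤ)) : ℤ) : ℝ)
              ≤ ((max (e N) (-(l:ℤ)) : ℤ) : ℝ) + 1 := by exact_mod_cast this
          simp only [hL, hTh, if_true]
          linarith
        · -- term = -1
          have hTh' : Θ N = false := by simpa using hTh
          rw [hTh'] at hrec; simp at hrec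
          have : max (e (N+1)) (-(l:ℤ)) ≤ max (e N) (-(l:ℤ)) - 1 := by omega
          have hcast : ((max (e (N+1)) (-(l:ℤ)) : ℤ) : ℝ)
              ≤ ((max (e N) (-(l:ℤ)) : ℤ) : ℝ) - 1 := by exact_mod_cast this
          simp only [hL, hTh', if_true, if_false, Bool.false_eq_true]
          linarith
      · -- term = 0
        have hL' : Λ N = false := by simpa using hL
        have hLc : ¬ (-(l:ℤ) ≤ min (e N) (e (N+1))) := fun h => hL ((hΛ' N).mpr h)
        have : max (e (N+1)) (-(l:ℤ)) ≤ max (e N) (-(l:ℤ)) := by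
          by_cases hTh : Θ N = true
          · rw [hTh] at hrec; simp at hrec; omega
          · have hTh' : Θ N = false := by simpa using hTh
            rw [hTh'] at hrec; simp at hrec; omega
        have hcast : ((max (e (N+1)) (-(l:ℤ)) : ℤ) : ℝ)
            ≤ ((max (e N) (-(l:ℤ)) : ℤ) : ℝ) := by exact_mod_cast this
        simp only [hL', if_false, Bool.false_eq_true]
        linarith
  have hkey := key T
  rw [Finset.sum_sub_distrib] at hkey
  have hmax : (-(l:ℤ)) ≤ max (e T) (-(l:ℤ)) := le_max_right _ _
  have hmaxR : (-(l:ℝ)) ≤ ((max (e T) (-(l:ℤ)) : ℤ) : ℝ) := by exact_mod_cast hmax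
  linarith
end

section
/- Fix γ > 1, Δ_max > 0, an integer l ≥ 1, and set Δ̂' = γ^{−l} Δ_max. Let Θ : ℕ → {0,1} and define the sequence (Δ_k) by Δ_0 = Δ_max and, for every k ≥ 0, Δ_{k+1} = min(γ Δ_k, Δ_max) if Θ_k = 1 and Δ_{k+1} = Δ_k / γ if Θ_k = 0. Define Λ_k = 1 if min(Δ_k, Δ_{k+1}) ≥ Δ̂' and Λ_k = 0 otherwise. Then for every T ≥ 1: Σ_{k=0}^{T−1} Λ_k Θ_k ≥ (1/2) Σ_{k=0}^{T−1} Λ_k − l/2. -/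
/-- exponent sequence -/
def stmt8Exp (Θ : ℕ → Bool) : ℕ → ℤ
  | 0 => 0
  | k + 1 => if Θ k then min (stmt8Exp Θ k + 1) 0 else stmt8Exp Θ k - 1

/-- among the first `T` iterations, the number of large-and-sufficient
iterations is at least half the number of large iterations minus `l/2`. -/
theorem stmt_8 (γ Δmax : ℝ) (hγ : 1 < γ) (hΔmax : 0 < Δmax)
    (l : ℕ) (hl : 1 ≤ l)
    (Θ Λ : ℕ → Bool) (Δ : ℕ → ℝ)
    (hΔ0 : Δ 0 = Δmax)
    (hΔrec : ∀ k, Δ (k + 1) = if Θ k then min (γ * Δ k) Δmax else Δ k / γ)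
    (hΛ : ∀ k, Λ k = true ↔ γ ^ (-(l : ℤ)) * Δmax ≤ min (Δ k) (Δ (k + 1)))
    (T : ℕ) (hT : 1 ≤ T) :
    ∑ k ∈ Finset.range T,
        (if Λ k then (1 : ℝ) else 0) * (if Θ k then (1 : ℝ) else 0)
      ≥ (1 / 2) * (∑ k ∈ Finset.range T, (if Λ k then (1 : ℝ) else 0)) - (l : ℝ) / 2 := by
  have hγ0 : (0 : ℝ) < γ := lt_trans one_pos hγ
  obtain ⟨e, he0, herec⟩ : ∃ e : ℕ → ℤ, e 0 = 0 ∧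
      ∀ k, e (k + 1) = if Θ k then min (e k + 1) 0 else e k - 1 :=
    ⟨stmt8Exp Θ, rfl, fun k => rfl⟩
  -- zpow monotonicity
  have hmono : ∀ a b : ℤ, γ ^ a ≤ γ ^ b ↔ a ≤ b := fun a b => zpow_le_zpow_iff_right₀ hγ
  have hminpow : ∀ a b : ℤ, min (γ ^ a * Δmax) (γ ^ b * Δmax) = γ ^ (min a b) * Δmax := by
    intro a b
    rcases le_total a b with h | h
    · rw [min_eq_left, min_eq_left h]
      exact mul_le_mul_of_nonneg_right ((hmono a b).2 h) hΔmax.le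
    · rw [min_eq_right, min_eq_right h]
      exact mul_le_mul_of_nonneg_right ((hmono b a).2 h) hΔmax.le
  -- Δ in terms of e
  have hΔe : ∀ k, Δ k = γ ^ (e k) * Δmax := by
    intro k
    induction k with
    | zero => simp [he0, hΔ0]
    | succ k ih =>
      rw [hΔrec k, ih]
      by_cases h : Θ k
      · simp only [h, if_true]
        have h1 : γ * (γ ^ (e k) * Δmax) = γ ^ (e k + 1) * Δmax := by
          rw [zpow_add_one₀ (ne_of_gt hγ0)]; ring
        have h2 : Δmax = γ ^ (0 : ℤ) * Δmax := by simp
        rw [h1]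
        nth_rewrite 2 [h2]
        rw [hminpow]
        rw [herec k, if_pos h]
      · simp only [h, Bool.false_eq_true, if_false]
        have : e (k + 1) = e k - 1 := by rw [herec k, if_neg h]
        rw [this, zpow_sub_one₀ (ne_of_gt hγ0)]
        field_simp
  have he_nonpos : ∀ k, e k ≤ 0 := by
    intro k
    induction k with
    | zero => simp [he0]
    | succ k ih =>
      by_cases h : Θ k
      · have : e (k + 1) = min (e k + 1) 0 := by rw [herec k, if_pos h]
        omega
      · have : e (k + 1) = e k - 1 := by rw [herec k, if_neg h]
        omega
  -- Λ in terms of e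
  have hΛe : ∀ k, Λ k = true ↔ -(l : ℤ) ≤ min (e k) (e (k + 1)) := by
    intro k
    rw [hΛ k, hΔe k, hΔe (k + 1), hminpow]
    constructor
    · intro h
      exact (hmono _ _).1 (le_of_mul_le_mul_right h hΔmax)
    · intro h
      exact mul_le_mul_of_nonneg_right ((hmono _ _).2 h) hΔmax.le
  -- potential
  obtain ⟨f, hfe⟩ : ∃ f : ℕ → ℤ, ∀ n, f n = max (e n) (-(l : ℤ)) :=
    ⟨_, fun n => rfl⟩
  have hstep : ∀ k, f (k + 1) - f k ≤
      (if Λ k ∧ Θ k then (1 : ℤ) else 0) - (if Λ k ∧ ¬(Θ k = true) then (1 : ℤ) else 0) := by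
    intro k
    rw [hfe, hfe]
    by_cases hθ : Θ k
    · have hrec : e (k + 1) = min (e k + 1) 0 := by rw [herec k, if_pos hθ]
      by_cases hL : Λ k
      · simp only [hL, hθ, and_self, if_true, not_true, and_false, if_false]
        omega
      · have h1 : ¬(-(l : ℤ) ≤ min (e k) (e (k + 1))) := fun h => hL ((hΛe k).2 h)
        push_neg at h1
        have h2 := he_nonpos k
        simp only [hL, Bool.false_eq_true, false_and, if_false]
        omega
    · have hrec : e (k + 1) = e k - 1 := by rw [herec k, if_neg hθ]
      by_cases hL : Λ k
      · have h1 := (hΛe k).1 hL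
        simp only [hL, hθ, Bool.false_eq_true, and_false, if_false, and_true, not_false_iff, if_true]
        omega
      · have h1 : ¬(-(l : ℤ) ≤ min (e k) (e (k + 1))) := fun h => hL ((hΛe k).2 h)
        push_neg at h1
        simp only [hL, Bool.false_eq_true, false_and, if_false]
        omega
  have hsum : ∀ n : ℕ, f n - f 0 ≤
      ∑ k ∈ Finset.range n,
        ((if Λ k ∧ Θ k then (1 : ℤ) else 0) - (if Λ k ∧ ¬(Θ k = true) then (1 : ℤ) else 0)) := by
    intro n
    induction n with
    | zero => simp
    | succ n ih =>
      rw [Finset.sum_range_succ]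
      have := hstep n
      omega
  have hfT : -(l : ℤ) ≤ f T := (hfe T) ▸ le_max_right _ _
  have hf0 : f 0 = 0 := by
    rw [hfe, he0]
    omega
  have hkey : -(l : ℤ) ≤
      ∑ k ∈ Finset.range T,
        ((if Λ k ∧ Θ k then (1 : ℤ) else 0) - (if Λ k ∧ ¬(Θ k = true) then (1 : ℤ) else 0)) := by
    have := hsum T
    omega
  -- cast to ℝ and finish
  set A : ℝ := ∑ k ∈ Finset.range T, (if Λ k ∧ Θ k then (1 : ℝ) else 0) with hA
  set B : ℝ := ∑ k ∈ Finset.range T, (if Λ k ∧ ¬(Θ k = true) then (1 : ℝ) else 0) with hB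
  have hcast : ((∑ k ∈ Finset.range T,
      ((if Λ k ∧ Θ k then (1 : ℤ) else 0) - (if Λ k ∧ ¬(Θ k = true) then (1 : ℤ) else 0)) : ℤ) : ℝ)
      = A - B := by
    push_cast
    rw [Finset.sum_sub_distrib]
  have hAB : -(l : ℝ) ≤ A - B := by
    rw [← hcast]
    exact_mod_cast hkey
  have hleft : ∑ k ∈ Finset.range T,
      (if Λ k then (1 : ℝ) else 0) * (if Θ k then (1 : ℝ) else 0) = A := by
    apply Finset.sum_congr rfl
    intro k _
    by_cases h1 : Λ k <;> by_cases h2 : Θ k <;> simp [h1, h2]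
  have hright : ∑ k ∈ Finset.range T, (if Λ k then (1 : ℝ) else 0) = A + B := by
    rw [hA, hB, ← Finset.sum_add_distrib]
    apply Finset.sum_congr rfl
    intro k _
    by_cases h1 : Λ k <;> by_cases h2 : Θ k <;> simp [h1, h2]
  rw [hleft, hright]
  linarith
end

section
/- Fix γ > 1, Δ_max > 0, an integer l ≥ 1, and set Δ̂' = γ^{−l} Δ_max. Let Θ : ℕ → {0,1} and define the sequence (Δ_k) by Δ_0 = Δ_max and, for every k ≥ 0, Δ_{k+1} = min(γ Δ_k, Δ_max) if Θ_k = 1 and Δ_{k+1} = Δ_k / γ if Θ_k = 0. Define Λ_k = 1 if min(Δ_k, Δ_{k+1}) ≥ Δ̂' and Λ_k = 0 otherwise. Then for every T ≥ 1: Σ_{k=0}^{T−1} (1 − Λ_k)(1 − Θ_k) ≥ Σ_{k=0}^{T−1} (1 − Λ_k) Θ_k. -/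
/-- among the first `T` iterations, the number of small-and-insufficient
iterations is at least the number of small-and-sufficient iterations. -/
theorem stmt_9 (γ Δmax : ℝ) (hγ : 1 < γ) (hΔmax : 0 < Δmax)
    (l : ℕ) (hl : 1 ≤ l)
    (Θ Λ : ℕ → Bool) (Δ : ℕ → ℝ)
    (hΔ0 : Δ 0 = Δmax)
    (hΔrec : ∀ k, Δ (k + 1) = if Θ k then min (γ * Δ k) Δmax else Δ k / γ)
    (hΛ : ∀ k, Λ k = true ↔ γ ^ (-(l : ℤ)) * Δmax ≤ min (Δ k) (Δ (k + 1)))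
    (T : ℕ) (hT : 1 ≤ T) :
    ∑ k ∈ Finset.range T,
        (1 - if Λ k then (1 : ℝ) else 0) * (1 - if Θ k then (1 : ℝ) else 0)
      ≥ ∑ k ∈ Finset.range T,
          (1 - if Λ k then (1 : ℝ) else 0) * (if Θ k then (1 : ℝ) else 0) := by
  have hγ0 : (0 : ℝ) < γ := lt_trans one_pos hγ
  have hl' : (1 : ℤ) ≤ (l : ℤ) := by exact_mod_cast hl
  have hzle : ∀ a b : ℤ, γ ^ a * Δmax ≤ γ ^ b * Δmax ↔ a ≤ b := by
    intro a b
    rw [mul_le_mul_iff_of_pos_right hΔmax, zpow_le_zpow_iff_right₀ hγ]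
  have main : ∀ T : ℕ, ∃ m : ℤ, m ≤ 0 ∧ Δ T = γ ^ m * Δmax ∧
      (∑ k ∈ Finset.range T,
        (1 - if Λ k then (1 : ℝ) else 0) * (1 - if Θ k then (1 : ℝ) else 0))
      - (∑ k ∈ Finset.range T,
        (1 - if Λ k then (1 : ℝ) else 0) * (if Θ k then (1 : ℝ) else 0))
      ≥ max 0 (((-(l : ℤ) - m : ℤ) : ℝ)) := by
    intro T
    induction T with
    | zero =>
      refine ⟨0, le_refl 0, by simpa using hΔ0, ?_⟩
      simp only [Finset.range_zero, Finset.sum_empty, sub_zero, ge_iff_le, max_le_iff]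
      refine ⟨le_refl 0, ?_⟩
      push_cast
      have : (0 : ℝ) ≤ (l : ℝ) := Nat.cast_nonneg l
      linarith
    | succ T ih =>
      obtain ⟨m, hm0, hΔm, hsum⟩ := ih
      have hΔpos : 0 < Δ T := by rw [hΔm]; positivity
      have hs0 : (0 : ℝ) ≤ _ := le_trans (le_max_left _ _) hsum
      have hsl : ((-(l : ℤ) - m : ℤ) : ℝ) ≤ _ := le_trans (le_max_right _ _) hsum
      push_cast at hsl
      rw [Finset.sum_range_succ, Finset.sum_range_succ]
      by_cases hθ : Θ T = true
      · -- sufficient step: Δ goes up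
        have key : γ * Δ T = γ ^ (m + 1) * Δmax := by
          rw [hΔm, zpow_add_one₀ (ne_of_gt hγ0)]; ring
        have hΔT1 : Δ (T + 1) = γ ^ (min (m + 1) 0) * Δmax := by
          rw [hΔrec T, if_pos hθ, key]
          rcases le_total (m + 1) 0 with h | h
          · rw [min_eq_left h, min_eq_left]
            calc γ ^ (m + 1) * Δmax ≤ γ ^ (0 : ℤ) * Δmax := (hzle _ _).mpr h
              _ = Δmax := by simp
          · rw [min_eq_right h, min_eq_right, zpow_zero, one_mul]
            have := (hzle 0 (m + 1)).mpr h
            simpa using this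
        have hle : Δ T ≤ Δ (T + 1) := by
          rw [hΔm, hΔT1, hzle]; omega
        have hΛiff : Λ T = true ↔ -(l : ℤ) ≤ m := by
          rw [hΛ T, min_eq_left hle, hΔm, hzle]
        by_cases hc : -(l : ℤ) ≤ m
        · have hΛT : Λ T = true := hΛiff.mpr hc
          refine ⟨min (m + 1) 0, min_le_right _ _, hΔT1, ?_⟩
          simp only [hΛT, if_true, sub_self, zero_mul, add_zero]
          rw [ge_iff_le, max_le_iff]
          refine ⟨by linarith, ?_⟩
          have hz : (-(l : ℤ) - min (m + 1) 0 : ℤ) ≤ 0 := by omega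
          have hz' : ((-(l : ℤ) - min (m + 1) 0 : ℤ) : ℝ) ≤ 0 := by exact_mod_cast hz
          linarith
        · have hΛT : Λ T = false := Bool.eq_false_iff.mpr (fun h => hc (hΛiff.mp h))
          push_neg at hc
          have hm1 : m + 1 ≤ 0 := by omega
          refine ⟨m + 1, hm1, by rw [hΔT1, min_eq_left hm1], ?_⟩
          simp only [hΛT, hθ, if_true, if_false]
          rw [ge_iff_le, max_le_iff]
          have hcl : (-(l : ℤ) : ℝ) - (m : ℝ) ≥ 1 := by
            have : (1 : ℤ) ≤ -(l : ℤ) - m := by omega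
            exact_mod_cast this
          push_cast at hcl
          constructor
          · push_cast; linarith
          · push_cast; linarith
      · -- insufficient step: Δ goes down
        have hθ' : Θ T = false := Bool.eq_false_iff.mpr hθ
        have hΔT1 : Δ (T + 1) = γ ^ (m - 1) * Δmax := by
          rw [hΔrec T, if_neg hθ, hΔm, zpow_sub_one₀ (ne_of_gt hγ0), div_eq_mul_inv]
          ring
        have hle : Δ (T + 1) ≤ Δ T := by rw [hΔm, hΔT1, hzle]; omega
        have hΛiff : Λ T = true ↔ -(l : ℤ) ≤ m - 1 := by
          rw [hΛ T, min_eq_right hle, hΔT1, hzle]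
        refine ⟨m - 1, by omega, hΔT1, ?_⟩
        by_cases hc : -(l : ℤ) ≤ m - 1
        · have hΛT : Λ T = true := hΛiff.mpr hc
          simp only [hΛT, if_true, sub_self, zero_mul, add_zero]
          rw [ge_iff_le, max_le_iff]
          refine ⟨by linarith, ?_⟩
          have hz : (-(l : ℤ) - (m - 1) : ℤ) ≤ 0 := by omega
          have hz' : ((-(l : ℤ) - (m - 1) : ℤ) : ℝ) ≤ 0 := by exact_mod_cast hz
          linarith
        · have hΛT : Λ T = false := Bool.eq_false_iff.mpr (fun h => hc (hΛiff.mp h))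
          simp only [hΛT, hθ', if_false]
          rw [ge_iff_le, max_le_iff]
          constructor
          · push_cast; linarith
          · push_cast; linarith
  obtain ⟨m, _, _, hsum⟩ := main T
  have := le_trans (le_max_left (0 : ℝ) (((-(l : ℤ) - m : ℤ) : ℝ))) hsum
  linarith
end

section
/- Let T ≥ 1 be an integer, let I, Θ, Λ : {0,…,T−1} → {0,1} be sequences, and let p, d be real numbers with d ≥ 0. Assume: (i) Σ_{k=0}^{T−1} Λ_k Θ_k ≥ (1/2) Σ_{k=0}^{T−1} Λ_k − d/2; (ii) Σ_{k=0}^{T−1} (1 − Λ_k) I_k ≤ Σ_{k=0}^{T−1} (1 − Λ_k)(1 − I_k); and (iii) Σ_{k=0}^{T−1} I_k ≥ p T. Then Σ_{k=0}^{T−1} Λ_k Θ_k I_k ≥ (p − 1/2) T − d/2. -/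
/-- deterministic counting argument combining the large/sufficient count,
the small accurate/inaccurate comparison, and the lower bound on accurate iterations. -/
theorem stmt_12 (T : ℕ) (hT : 1 ≤ T) (I Θ Λ : ℕ → Bool) (p d : ℝ) (hd : 0 ≤ d)
    (h1 : ∑ k ∈ Finset.range T,
        (if Λ k then (1 : ℝ) else 0) * (if Θ k then (1 : ℝ) else 0)
      ≥ (1 / 2) * (∑ k ∈ Finset.range T, (if Λ k then (1 : ℝ) else 0)) - d / 2)
    (h2 : ∑ k ∈ Finset.range T,
        (1 - if Λ k then (1 : ℝ) else 0) * (if I k then (1 : ℝ) else 0)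
      ≤ ∑ k ∈ Finset.range T,
          (1 - if Λ k then (1 : ℝ) else 0) * (1 - if I k then (1 : ℝ) else 0))
    (h3 : p * T ≤ ∑ k ∈ Finset.range T, (if I k then (1 : ℝ) else 0)) :
    ∑ k ∈ Finset.range T,
        (if Λ k then (1 : ℝ) else 0) * (if Θ k then (1 : ℝ) else 0)
          * (if I k then (1 : ℝ) else 0)
      ≥ (p - 1 / 2) * T - d / 2 := by
  set a : ℕ → ℝ := fun k => if Λ k then (1 : ℝ) else 0 with ha
  set b : ℕ → ℝ := fun k => if Θ k then (1 : ℝ) else 0 with hb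
  set c : ℕ → ℝ := fun k => if I k then (1 : ℝ) else 0 with hc
  have key : ∑ k ∈ Finset.range T, (a k * b k + a k * c k - a k)
      ≤ ∑ k ∈ Finset.range T, a k * b k * c k := by
    apply Finset.sum_le_sum
    intro k _
    simp only [ha, hb, hc]
    by_cases hΛ : Λ k <;> by_cases hΘ : Θ k <;> by_cases hI : I k <;>
      simp [hΛ, hΘ, hI]
  have e1 : ∑ k ∈ Finset.range T, a k * c k
      = ∑ k ∈ Finset.range T, c k - ∑ k ∈ Finset.range T, (1 - a k) * c k := by
    rw [← Finset.sum_sub_distrib]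
    apply Finset.sum_congr rfl
    intro k _; ring
  have e2 : ∑ k ∈ Finset.range T, (1 - a k) * (1 - c k)
      = (T : ℝ) - ∑ k ∈ Finset.range T, a k - ∑ k ∈ Finset.range T, (1 - a k) * c k := by
    have : ∑ k ∈ Finset.range T, (1 : ℝ) = (T : ℝ) := by simp
    rw [← this, ← Finset.sum_sub_distrib, ← Finset.sum_sub_distrib]
    apply Finset.sum_congr rfl
    intro k _; ring
  rw [Finset.sum_sub_distrib, Finset.sum_add_distrib] at key
  linarith [key, h1, h2, h3, e1, e2]
end

section
/- (Burkholder-type inequality) Let p ∈ (1,2], let (𝓕_k)_{k ≥ 0} be a filtration, and let (X_k)_{k ≥ 0} be an adapted sequence of real random variables such that 𝔼[X_k | 𝓕_{k−1}] = 0 almost surely and 𝔼[|X_k|^p] < ∞ for every k (with 𝓕_{−1} the trivial σ-algebra). Then for every T ≥ 1: 𝔼[ | Σ_{k=0}^{T−1} X_k |^p ] ≤ 2^{2−p} Σ_{k=0}^{T−1} 𝔼[ |X_k|^p ]. -/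
open Real MeasureTheory

section BurkholderAux

lemma rpow_subadd {a b q : ℝ} (ha : 0 ≤ a) (hb : 0 ≤ b) (hq : 0 ≤ q) (hq1 : q ≤ 1) :
    (a + b) ^ q ≤ a ^ q + b ^ q := by
  have h := NNReal.coe_le_coe.2 (NNReal.rpow_add_le_add_rpow a.toNNReal b.toNNReal hq hq1)
  push_cast [NNReal.coe_rpow, Real.coe_toNNReal _ ha, Real.coe_toNNReal _ hb] at h
  exact h

lemma rpow_concave_two {a b q : ℝ} (ha : 0 ≤ a) (hb : 0 ≤ b) (hq : 0 < q) (hq1 : q ≤ 1) :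
    a ^ q + b ^ q ≤ 2 ^ (1 - q) * (a + b) ^ q := by
  have hcon := (Real.concaveOn_rpow hq.le hq1).2 (Set.mem_Ici.2 ha) (Set.mem_Ici.2 hb)
    (by norm_num : (0:ℝ) ≤ 1/2) (by norm_num : (0:ℝ) ≤ 1/2) (by norm_num)
  simp only [smul_eq_mul] at hcon
  have hhalf : ((1:ℝ)/2 * a + 1/2 * b) ^ q = 2 ^ (-q) * (a + b) ^ q := by
    rw [show (1:ℝ)/2 * a + 1/2 * b = 2⁻¹ * (a + b) by ring,
      Real.mul_rpow (by norm_num) (by linarith),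
      Real.inv_rpow (by norm_num : (0:ℝ) ≤ 2), ← Real.rpow_neg (by norm_num : (0:ℝ) ≤ 2)]
  rw [hhalf] at hcon
  have h2 : (2:ℝ) ^ (1 - q) = 2 * 2 ^ (-q) := by
    rw [show (1:ℝ) - q = 1 + (-q) by ring, Real.rpow_add (by norm_num), Real.rpow_one]
  nlinarith [Real.rpow_nonneg (by linarith : (0:ℝ) ≤ a + b) q]

section Core
variable {p : ℝ}

lemma hasDerivAt_one_add (hp1 : 1 < p) (t : ℝ) :
    HasDerivAt (fun t : ℝ => (1 + t) ^ p) (p * (1 + t) ^ (p - 1)) t := by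
  have h := ((hasDerivAt_id t).const_add 1).rpow_const (p := p) (Or.inr hp1.le)
  simpa using h

lemma core_nonneg (hp1 : 1 < p) (hp2 : p ≤ 2) {t : ℝ} (ht : 0 ≤ t) :
    (1 + t) ^ p ≤ 1 + p * t + 2 ^ (2 - p) * t ^ p := by
  set c : ℝ := 2 ^ (2 - p) with hc
  have hc1 : (1:ℝ) ≤ c := by
    rw [hc, show (1:ℝ) = 2 ^ (0:ℝ) by simp]
    exact Real.rpow_le_rpow_of_exponent_le one_le_two (by linarith)
  set F : ℝ → ℝ := fun t => 1 + p * t + c * t ^ p - (1 + t) ^ p with hF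
  have hder : ∀ x : ℝ, HasDerivAt F (p + c * (p * x ^ (p - 1)) - p * (1 + x) ^ (p - 1)) x := by
    intro x
    have h1 : HasDerivAt (fun t : ℝ => t ^ p) (p * x ^ (p - 1)) x :=
      Real.hasDerivAt_rpow_const (Or.inr hp1.le)
    have h2 := hasDerivAt_one_add hp1 x
    have h3 : HasDerivAt (fun t : ℝ => 1 + p * t) (p) x := by
      simpa using ((hasDerivAt_id x).const_mul p).const_add 1
    exact (h3.add (h1.const_mul c)).sub h2
  have hmono : MonotoneOn F (Set.Ici 0) := by
    apply monotoneOn_of_deriv_nonneg (convex_Ici 0)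
      (continuous_iff_continuousAt.2 fun x => (hder x).continuousAt).continuousOn
    · intro x _
      exact (hder x).differentiableAt.differentiableWithinAt
    · intro x hx
      rw [interior_Ici] at hx
      rw [(hder x).deriv]
      have hxpos : (0:ℝ) < x := hx
      have hsub : (1 + x) ^ (p - 1) ≤ 1 + x ^ (p - 1) := by
        have h := rpow_subadd (zero_le_one (α := ℝ)) hxpos.le
          (by linarith : (0:ℝ) ≤ p - 1) (by linarith)
        rwa [Real.one_rpow] at h
      have hxq : (0:ℝ) ≤ x ^ (p - 1) := Real.rpow_nonneg hxpos.le _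
      have hmul := mul_le_mul_of_nonneg_left hsub (by linarith : (0:ℝ) ≤ p)
      nlinarith [mul_nonneg (mul_nonneg (by linarith : (0:ℝ) ≤ c - 1)
        (by linarith : (0:ℝ) ≤ p)) hxq]
  have h0 : F 0 = 0 := by
    simp [hF, Real.zero_rpow (by positivity : p ≠ 0), Real.one_rpow]
  have := hmono (Set.mem_Ici.2 (le_refl (0:ℝ))) (Set.mem_Ici.2 ht) ht
  rw [h0] at this
  have : 0 ≤ 1 + p * t + c * t ^ p - (1 + t) ^ p := this
  linarith

lemma core_mid (hp1 : 1 < p) (hp2 : p ≤ 2) {s : ℝ} (hs0 : 0 ≤ s) (hs1 : s ≤ 1) :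
    (1 - s) ^ p ≤ 1 - p * s + 2 ^ (2 - p) * s ^ p := by
  set c : ℝ := 2 ^ (2 - p) with hc
  have hc1 : (1:ℝ) ≤ c := by
    rw [hc, show (1:ℝ) = 2 ^ (0:ℝ) by simp]
    exact Real.rpow_le_rpow_of_exponent_le one_le_two (by linarith)
  set F : ℝ → ℝ := fun t => c * t ^ p + 1 - p * t - (1 - t) ^ p with hF
  have hder : ∀ x : ℝ,
      HasDerivAt F (c * (p * x ^ (p - 1)) - p - -1 * p * (1 - x) ^ (p - 1)) x := by
    intro x
    have h1 : HasDerivAt (fun t : ℝ => t ^ p) (p * x ^ (p - 1)) x :=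
      Real.hasDerivAt_rpow_const (Or.inr hp1.le)
    have h2 : HasDerivAt (fun t : ℝ => (1 - t) ^ p) (-1 * p * (1 - x) ^ (p - 1)) x :=
      ((hasDerivAt_id x).const_sub 1).rpow_const (Or.inr hp1.le)
    have h3 : HasDerivAt (fun t : ℝ => c * t ^ p + 1 - p * t)
        (c * (p * x ^ (p - 1)) - p) x := by
      have h4 := (((h1.const_mul c).add_const 1)).sub ((hasDerivAt_id x).const_mul p)
      simp only [mul_one] at h4
      exact h4
    exact h3.sub h2
  have hmono : MonotoneOn F (Set.Icc 0 1) := by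
    apply monotoneOn_of_deriv_nonneg (convex_Icc 0 1)
      (continuous_iff_continuousAt.2 fun x => (hder x).continuousAt).continuousOn
    · intro x _
      exact (hder x).differentiableAt.differentiableWithinAt
    · intro x hx
      rw [interior_Icc] at hx
      rw [(hder x).deriv]
      have hx0 : (0:ℝ) < x := hx.1
      have hx1 : x < 1 := hx.2
      have hsub : (1:ℝ) ≤ x ^ (p - 1) + (1 - x) ^ (p - 1) := by
        have h := rpow_subadd hx0.le (by linarith : (0:ℝ) ≤ 1 - x)
          (by linarith : (0:ℝ) ≤ p - 1) (by linarith)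
        rwa [show x + (1 - x) = 1 by ring, Real.one_rpow] at h
      have hxq : (0:ℝ) ≤ x ^ (p - 1) := Real.rpow_nonneg hx0.le _
      have hmul := mul_le_mul_of_nonneg_left hsub (by linarith : (0:ℝ) ≤ p)
      nlinarith [mul_nonneg (mul_nonneg (by linarith : (0:ℝ) ≤ c - 1)
        (by linarith : (0:ℝ) ≤ p)) hxq]
  have h0 : F 0 = 0 := by
    simp [hF, Real.zero_rpow (by positivity : p ≠ 0), Real.one_rpow]
  have hge := hmono (Set.mem_Icc.2 ⟨le_refl 0, zero_le_one⟩) (Set.mem_Icc.2 ⟨hs0, hs1⟩) hs0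
  rw [h0] at hge
  have : 0 ≤ c * s ^ p + 1 - p * s - (1 - s) ^ p := hge
  linarith

lemma core_far (hp1 : 1 < p) (hp2 : p ≤ 2) {s : ℝ} (hs : 1 ≤ s) :
    (s - 1) ^ p ≤ 1 - p * s + 2 ^ (2 - p) * s ^ p := by
  set c : ℝ := 2 ^ (2 - p) with hc
  have hc1 : (1:ℝ) ≤ c := by
    rw [hc, show (1:ℝ) = 2 ^ (0:ℝ) by simp]
    exact Real.rpow_le_rpow_of_exponent_le one_le_two (by linarith)
  set F : ℝ → ℝ := fun t => c * t ^ p + 1 - p * t - (t - 1) ^ p with hF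
  have hder : ∀ x : ℝ,
      HasDerivAt F (c * (p * x ^ (p - 1)) - p - 1 * p * (x - 1) ^ (p - 1)) x := by
    intro x
    have h1 : HasDerivAt (fun t : ℝ => t ^ p) (p * x ^ (p - 1)) x :=
      Real.hasDerivAt_rpow_const (Or.inr hp1.le)
    have h2 : HasDerivAt (fun t : ℝ => (t - 1) ^ p) (1 * p * (x - 1) ^ (p - 1)) x :=
      ((hasDerivAt_id x).sub_const 1).rpow_const (Or.inr hp1.le)
    have h4 := ((((h1.const_mul c).add_const 1)).sub ((hasDerivAt_id x).const_mul p)).sub h2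
    simp only [mul_one] at h4
    exact h4
  have hmono : MonotoneOn F (Set.Ici 1) := by
    apply monotoneOn_of_deriv_nonneg (convex_Ici 1)
      (continuous_iff_continuousAt.2 fun x => (hder x).continuousAt).continuousOn
    · intro x _
      exact (hder x).differentiableAt.differentiableWithinAt
    · intro x hx
      rw [interior_Ici] at hx
      rw [(hder x).deriv]
      have hx1 : (1:ℝ) < x := hx
      have hconc : (x - 1) ^ (p - 1) + 1 ≤ c * x ^ (p - 1) := by
        have h := rpow_concave_two (by linarith : (0:ℝ) ≤ x - 1) zero_le_one
          (by linarith : (0:ℝ) < p - 1) (by linarith)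
        rwa [Real.one_rpow, show x - 1 + 1 = x by ring,
          show (1:ℝ) - (p - 1) = 2 - p by ring, ← hc] at h
      have hmul := mul_le_mul_of_nonneg_left hconc (by linarith : (0:ℝ) ≤ p)
      nlinarith
  have h0 : 0 ≤ F 1 := by
    have : F 1 = c + 1 - p := by
      simp [hF, Real.one_rpow, Real.zero_rpow (by positivity : p ≠ 0)]
    rw [this]; linarith
  have hge := hmono (Set.mem_Ici.2 (le_refl 1)) (Set.mem_Ici.2 hs) hs
  have : 0 ≤ c * s ^ p + 1 - p * s - (s - 1) ^ p := le_trans h0 hge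
  linarith

lemma core_ineq (hp1 : 1 < p) (hp2 : p ≤ 2) (t : ℝ) :
    |1 + t| ^ p ≤ 1 + p * t + 2 ^ (2 - p) * |t| ^ p := by
  rcases le_or_gt 0 t with ht | ht
  · rw [abs_of_nonneg (by linarith : (0:ℝ) ≤ 1 + t), abs_of_nonneg ht]
    exact core_nonneg hp1 hp2 ht
  · rcases le_or_gt (-1) t with ht1 | ht1
    · rw [abs_of_nonneg (by linarith : (0:ℝ) ≤ 1 + t), abs_of_neg ht]
      have h := core_mid hp1 hp2 (by linarith : (0:ℝ) ≤ -t) (by linarith : -t ≤ 1)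
      rw [show (1:ℝ) - -t = 1 + t by ring] at h
      linarith
    · rw [abs_of_neg (by linarith : 1 + t < 0), abs_of_neg ht]
      have h := core_far hp1 hp2 (by linarith : (1:ℝ) ≤ -t)
      rw [show -t - 1 = -(1 + t) by ring] at h
      linarith

end Core

section Key
variable {p : ℝ}

lemma c_ge_one (hp2 : p ≤ 2) : (1:ℝ) ≤ 2 ^ (2 - p) := by
  rw [show (1:ℝ) = 2 ^ (0:ℝ) by simp]
  exact Real.rpow_le_rpow_of_exponent_le one_le_two (by linarith)

lemma key_pos (hp1 : 1 < p) (hp2 : p ≤ 2) {a : ℝ} (ha : 0 < a) (b : ℝ) :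
    |a + b| ^ p ≤ a ^ p + p * a ^ (p - 1) * b + 2 ^ (2 - p) * |b| ^ p := by
  set c : ℝ := 2 ^ (2 - p) with hc
  have hap : (0:ℝ) ≤ a ^ p := Real.rpow_nonneg ha.le p
  have h2 := mul_le_mul_of_nonneg_left (core_ineq hp1 hp2 (b / a)) hap
  have he1 : |a + b| ^ p = a ^ p * |1 + b / a| ^ p := by
    have hab : a + b = a * (1 + b / a) := by field_simp
    rw [hab, abs_mul, abs_of_pos ha, Real.mul_rpow ha.le (abs_nonneg _)]
  have he2 : a ^ p * (1 + p * (b / a) + c * |b / a| ^ p)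
      = a ^ p + p * a ^ (p - 1) * b + c * |b| ^ p := by
    have hbd : |b / a| ^ p = |b| ^ p / a ^ p := by
      rw [abs_div, abs_of_pos ha, Real.div_rpow (abs_nonneg b) ha.le]
    have hane : a ^ p ≠ 0 := (Real.rpow_pos_of_pos ha p).ne'
    have hap1 : a ^ (p - 1) * a = a ^ p := by
      rw [← Real.rpow_add_one ha.ne' (p - 1)]
      norm_num
    rw [hbd]
    field_simp
    linear_combination (-(p * b)) * hap1
  rw [he1]
  rw [he2] at h2
  exact h2

lemma key_ineq (hp1 : 1 < p) (hp2 : p ≤ 2) (a b : ℝ) :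
    |a + b| ^ p
      ≤ |a| ^ p + p * (Real.sign a * |a| ^ (p - 1)) * b + 2 ^ (2 - p) * |b| ^ p := by
  rcases lt_trichotomy a 0 with hneg | rfl | hpos
  · have h := key_pos hp1 hp2 (a := -a) (by linarith) (-b)
    rw [show -a + -b = -(a + b) by ring, abs_neg, abs_neg] at h
    rw [Real.sign_of_neg hneg, abs_of_neg hneg]
    have hmid : p * (-a) ^ (p - 1) * (-b) = p * (-1 * (-a) ^ (p - 1)) * b := by ring
    linarith
  · rw [Real.sign_zero, zero_mul, mul_zero, zero_mul, zero_add, abs_zero,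
      Real.zero_rpow (by positivity : p ≠ 0), zero_add, zero_add]
    exact le_mul_of_one_le_left (Real.rpow_nonneg (abs_nonneg _) p) (c_ge_one hp2)
  · have h := key_pos hp1 hp2 hpos b
    rw [Real.sign_of_pos hpos, abs_of_pos hpos]
    have hmid : p * a ^ (p - 1) * b = p * (1 * a ^ (p - 1)) * b := by ring
    linarith

lemma abs_add_rpow_le (hp0 : 0 ≤ p) (hp2 : p ≤ 2) (a b : ℝ) :
    |a + b| ^ p ≤ 4 * (|a| ^ p + |b| ^ p) := by
  have h4 : (2:ℝ) ^ p ≤ 4 := by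
    have h := Real.rpow_le_rpow_of_exponent_le one_le_two hp2
    rwa [show ((2:ℝ) ^ (2:ℝ)) = 4 by
      rw [show (2:ℝ) = ((2:ℕ):ℝ) by norm_num, Real.rpow_natCast]; norm_num] at h
  rcases le_total |a| |b| with h | h
  · have h1 : |a + b| ≤ 2 * |b| := (abs_add_le a b).trans (by linarith)
    have h2 : |a + b| ^ p ≤ (2 * |b|) ^ p := Real.rpow_le_rpow (abs_nonneg _) h1 hp0
    rw [Real.mul_rpow (by norm_num) (abs_nonneg _)] at h2
    nlinarith [Real.rpow_nonneg (abs_nonneg a) p, Real.rpow_nonneg (abs_nonneg b) p]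
  · have h1 : |a + b| ≤ 2 * |a| := (abs_add_le a b).trans (by linarith)
    have h2 : |a + b| ^ p ≤ (2 * |a|) ^ p := Real.rpow_le_rpow (abs_nonneg _) h1 hp0
    rw [Real.mul_rpow (by norm_num) (abs_nonneg _)] at h2
    nlinarith [Real.rpow_nonneg (abs_nonneg a) p, Real.rpow_nonneg (abs_nonneg b) p]

lemma mul_abs_bound (hp1 : 1 < p) (a x : ℝ) :
    |a| ^ (p - 1) * |x| ≤ |a| ^ p + |x| ^ p := by
  have hself : ∀ y : ℝ, |y| ^ (p - 1) * |y| = |y| ^ p := by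
    intro y
    have h := Real.rpow_add' (abs_nonneg y) (by norm_num; positivity : p - 1 + 1 ≠ 0)
    rw [Real.rpow_one] at h
    rw [← h]
    norm_num
  rcases le_total |a| |x| with h | h
  · have h1 : |a| ^ (p - 1) ≤ |x| ^ (p - 1) :=
      Real.rpow_le_rpow (abs_nonneg _) h (by linarith)
    have h2 := mul_le_mul_of_nonneg_right h1 (abs_nonneg x)
    rw [hself x] at h2
    linarith [Real.rpow_nonneg (abs_nonneg a) p]
  · have h2 := mul_le_mul_of_nonneg_left h (Real.rpow_nonneg (abs_nonneg a) (p - 1))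
    rw [hself a] at h2
    linarith [Real.rpow_nonneg (abs_nonneg x) p]

end Key

open MeasureTheory

lemma measurable_real_sign : Measurable Real.sign := by
  unfold Real.sign
  exact Measurable.ite (measurableSet_lt measurable_id measurable_const) measurable_const
    (Measurable.ite (measurableSet_lt measurable_const measurable_id) measurable_const
      measurable_const)

lemma abs_real_sign_le (y : ℝ) : |Real.sign y| ≤ 1 := by
  rcases Real.sign_apply_eq y with h | h | h <;> rw [h] <;> norm_num


end BurkholderAux

open MeasureTheory

/-- Burkholder-type inequality: for a martingale difference sequence
`(X_k)` with finite `p`-th moments, `1 < p ≤ 2`,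
`𝔼|Σ_{k<T} X_k|^p ≤ 2^{2−p} Σ_{k<T} 𝔼|X_k|^p`. -/
theorem stmt_13 {Ω : Type*} {m0 : MeasurableSpace Ω} {ℙ : Measure Ω}
    [IsProbabilityMeasure ℙ] (ℱ : Filtration ℕ m0)
    (X : ℕ → Ω → ℝ) (hadapted : Adapted ℱ X)
    (hint : ∀ k, Integrable (X k) ℙ)
    (p : ℝ) (hp1 : 1 < p) (hp2 : p ≤ 2)
    (h0 : ∫ ω, X 0 ω ∂ℙ = 0)
    (hmart : ∀ k, ℙ[X (k + 1)|ℱ k] =ᵐ[ℙ] 0)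
    (hmom : ∀ k, Integrable (fun ω => |X k ω| ^ p) ℙ)
    (T : ℕ) (hT : 1 ≤ T) :
    ∫ ω, |∑ k ∈ Finset.range T, X k ω| ^ p ∂ℙ
      ≤ 2 ^ (2 - p) * ∑ k ∈ Finset.range T, ∫ ω, |X k ω| ^ p ∂ℙ := by
  obtain ⟨n₀, rfl⟩ : ∃ n, T = n + 1 := ⟨T - 1, (Nat.succ_pred_eq_of_pos hT).symm⟩
  set c : ℝ := 2 ^ (2 - p) with hc
  have hc1 : (1:ℝ) ≤ c := c_ge_one hp2
  have hXm : ∀ k, StronglyMeasurable (X k) := fun k => ((hadapted k).mono (ℱ.le k) le_rfl).stronglyMeasurable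
  set S : ℕ → Ω → ℝ := fun n ω => ∑ k ∈ Finset.range n, X k ω with hS
  have hSmF : ∀ n, StronglyMeasurable[ℱ n] (S (n+1)) := by
    intro n
    exact Finset.stronglyMeasurable_fun_sum _ fun k hk =>
      ((hadapted k).mono (ℱ.mono (Nat.lt_succ_iff.mp (Finset.mem_range.mp hk))) le_rfl).stronglyMeasurable
  have hSm : ∀ n, StronglyMeasurable (S n) := fun n =>
    Finset.stronglyMeasurable_fun_sum _ fun k _ => hXm k
  have habsm : ∀ n, AEStronglyMeasurable (fun ω => |S n ω| ^ p) ℙ := by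
    intro n
    exact (((continuous_abs.rpow_const fun x => Or.inr (by linarith)).measurable).comp
      (hSm n).measurable).aestronglyMeasurable
  have main : ∀ n, Integrable (fun ω => |S (n+1) ω| ^ p) ℙ ∧
      ∫ ω, |S (n+1) ω| ^ p ∂ℙ ≤ c * ∑ k ∈ Finset.range (n+1), ∫ ω, |X k ω| ^ p ∂ℙ := by
    intro n
    induction n with
    | zero =>
      have hS1 : S 1 = X 0 := by funext ω; simp [hS]
      refine ⟨by rw [hS1]; exact hmom 0, ?_⟩
      rw [hS1, Finset.sum_range_one]
      exact le_mul_of_one_le_left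
        (integral_nonneg fun ω => Real.rpow_nonneg (abs_nonneg _) p) hc1
    | succ n ih =>
      obtain ⟨ihInt, ihB⟩ := ih
      have hsplit : ∀ ω, S (n+2) ω = S (n+1) ω + X (n+1) ω := by
        intro ω; simp [hS, Finset.sum_range_succ]
      set g : Ω → ℝ := fun ω => Real.sign (S (n+1) ω) * |S (n+1) ω| ^ (p-1) with hg
      have hgsF : StronglyMeasurable[ℱ n] g := by
        have hφ : Measurable fun y : ℝ => Real.sign y * |y| ^ (p - 1) :=
          measurable_real_sign.mul
            ((continuous_abs.rpow_const fun x => Or.inr (by linarith)).measurable)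
        exact (hφ.comp (hSmF n).measurable).stronglyMeasurable
      have hgm0 : AEStronglyMeasurable g ℙ :=
        ((hgsF.mono (ℱ.le n))).aestronglyMeasurable
      have hgabs : ∀ ω, |g ω| ≤ |S (n+1) ω| ^ (p-1) := by
        intro ω
        rw [hg]
        calc |Real.sign (S (n+1) ω) * |S (n+1) ω| ^ (p-1)|
            = |Real.sign (S (n+1) ω)| * |S (n+1) ω| ^ (p-1) := by
              rw [abs_mul, abs_of_nonneg (Real.rpow_nonneg (abs_nonneg _) _)]
          _ ≤ 1 * |S (n+1) ω| ^ (p-1) := by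
              exact mul_le_mul_of_nonneg_right (abs_real_sign_le _)
                (Real.rpow_nonneg (abs_nonneg _) _)
          _ = |S (n+1) ω| ^ (p-1) := one_mul _
      have hptbd : ∀ ω, |g ω * X (n+1) ω| ≤ |S (n+1) ω| ^ p + |X (n+1) ω| ^ p := by
        intro ω
        calc |g ω * X (n+1) ω| = |g ω| * |X (n+1) ω| := abs_mul _ _
          _ ≤ |S (n+1) ω| ^ (p-1) * |X (n+1) ω| :=
              mul_le_mul_of_nonneg_right (hgabs ω) (abs_nonneg _)
          _ ≤ _ := mul_abs_bound hp1 _ _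
      have hInt_gX : Integrable (fun ω => g ω * X (n+1) ω) ℙ := by
        refine (ihInt.add (hmom (n+1))).mono'
          (hgm0.mul (hXm (n+1)).aestronglyMeasurable) (ae_of_all _ fun ω => ?_)
        rw [Real.norm_eq_abs]
        exact hptbd ω
      haveI : SigmaFinite (ℙ.trim (ℱ.le n)) := inferInstance
      have hzero : ∫ ω, g ω * X (n+1) ω ∂ℙ = 0 := by
        have hInt' : Integrable (g * X (n+1)) ℙ := hInt_gX
        have hpull := condExp_mul_of_stronglyMeasurable_left hgsF hInt' (hint (n+1))
        have h2 : ℙ[g * X (n+1)|ℱ n] =ᵐ[ℙ] 0 := by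
          refine hpull.trans ?_
          filter_upwards [hmart n] with ω hω
          simp [Pi.mul_apply, hω]
        calc ∫ ω, g ω * X (n+1) ω ∂ℙ = ∫ ω, (ℙ[g * X (n+1)|ℱ n]) ω ∂ℙ :=
              (integral_condExp (ℱ.le n)).symm
          _ = 0 := by rw [integral_congr_ae h2]; simp
      have hIntNext : Integrable (fun ω => |S (n+2) ω| ^ p) ℙ := by
        refine ((ihInt.add (hmom (n+1))).const_mul 4).mono' (habsm (n+2))
          (ae_of_all _ fun ω => ?_)
        rw [Real.norm_eq_abs, abs_of_nonneg (Real.rpow_nonneg (abs_nonneg _) _), hsplit ω]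
        exact abs_add_rpow_le (by linarith) hp2 _ _
      have hRHSint : Integrable
          (fun ω => |S (n+1) ω| ^ p + p * (g ω * X (n+1) ω) + c * |X (n+1) ω| ^ p) ℙ :=
        (ihInt.add (hInt_gX.const_mul p)).add ((hmom (n+1)).const_mul c)
      have hmono : ∀ ω, |S (n+2) ω| ^ p
          ≤ |S (n+1) ω| ^ p + p * (g ω * X (n+1) ω) + c * |X (n+1) ω| ^ p := by
        intro ω
        rw [hsplit ω]
        have h := key_ineq hp1 hp2 (S (n+1) ω) (X (n+1) ω)
        rw [hg]
        have : p * (Real.sign (S (n+1) ω) * |S (n+1) ω| ^ (p-1) * X (n+1) ω)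
            = p * (Real.sign (S (n+1) ω) * |S (n+1) ω| ^ (p-1)) * X (n+1) ω := by ring
        rw [this]
        exact h
      have hle : ∫ ω, |S (n+2) ω| ^ p ∂ℙ
          ≤ ∫ ω, (|S (n+1) ω| ^ p + p * (g ω * X (n+1) ω) + c * |X (n+1) ω| ^ p) ∂ℙ :=
        integral_mono hIntNext hRHSint hmono
      have heq : ∫ ω, (|S (n+1) ω| ^ p + p * (g ω * X (n+1) ω) + c * |X (n+1) ω| ^ p) ∂ℙ
          = ∫ ω, |S (n+1) ω| ^ p ∂ℙ + c * ∫ ω, |X (n+1) ω| ^ p ∂ℙ := by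
        have hA : Integrable (fun ω => |S (n+1) ω| ^ p + p * (g ω * X (n+1) ω)) ℙ :=
          ihInt.add (hInt_gX.const_mul p)
        have hB : Integrable (fun ω => p * (g ω * X (n+1) ω)) ℙ := hInt_gX.const_mul p
        have hC : Integrable (fun ω => c * |X (n+1) ω| ^ p) ℙ := (hmom (n+1)).const_mul c
        rw [integral_add hA hC, integral_add ihInt hB, integral_const_mul, integral_const_mul,
          hzero]
        ring
      refine ⟨hIntNext, ?_⟩
      rw [Finset.sum_range_succ, mul_add]
      calc ∫ ω, |S (n+2) ω| ^ p ∂ℙ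
          ≤ ∫ ω, |S (n+1) ω| ^ p ∂ℙ + c * ∫ ω, |X (n+1) ω| ^ p ∂ℙ := by
            rw [← heq]; exact hle
        _ ≤ c * ∑ k ∈ Finset.range (n+1), ∫ ω, |X k ω| ^ p ∂ℙ
              + c * ∫ ω, |X (n+1) ω| ^ p ∂ℙ := by linarith
  simpa [hS] using (main n₀).2
end

section
/- For every real p with 1 < p ≤ 2 and all real numbers a, b: |a + b|^p ≤ |a|^p + p · sgn(a) · |a|^{p−1} · b + 2^{2−p} · |b|^p, where sgn(a) = 1 if a > 0, sgn(a) = −1 if a < 0, and sgn(a) = 0 if a = 0. -/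
open Real Set

lemma my_subadd {q x y : ℝ} (hq0 : 0 ≤ q) (hq1 : q ≤ 1) (hx : 0 ≤ x) (hy : 0 ≤ y) :
    (x + y) ^ q ≤ x ^ q + y ^ q := by
  have h := NNReal.rpow_add_le_add_rpow x.toNNReal y.toNNReal hq0 hq1
  have := NNReal.coe_le_coe.2 h
  push_cast at this
  rwa [Real.coe_toNNReal x hx, Real.coe_toNNReal y hy] at this

lemma my_jensen {q v : ℝ} (hq0 : 0 ≤ q) (hq1 : q ≤ 1) (hv : 0 ≤ v) :
    1 + v ^ q ≤ 2 ^ (1 - q) * (1 + v) ^ q := by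
  have h := (Real.concaveOn_rpow hq0 hq1).2 (Set.mem_Ici.2 (zero_le_one)) (Set.mem_Ici.2 hv)
      (by norm_num : (0:ℝ) ≤ (1:ℝ)/2) (by norm_num : (0:ℝ) ≤ (1:ℝ)/2) (by norm_num)
  simp only [smul_eq_mul, Real.one_rpow] at h
  have h2 : (1/2 * 1 + 1/2 * v : ℝ) = (1+v) * (2:ℝ)⁻¹ := by ring
  rw [h2, Real.mul_rpow (by linarith) (by norm_num),
    Real.inv_rpow (by norm_num), ← Real.rpow_neg (by norm_num)] at h
  have h3 : (2:ℝ) ^ (1 - q) = 2 * 2 ^ (-q) := by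
    rw [show (1:ℝ) - q = 1 + (-q) by ring, Real.rpow_add (by norm_num), Real.rpow_one]
  rw [h3]
  nlinarith [h, Real.rpow_nonneg (by linarith : (0:ℝ) ≤ 1+v) q]

lemma my_key (p : ℝ) (hp1 : 1 < p) (hp2 : p ≤ 2) (t : ℝ) :
    |1 + t| ^ p ≤ 1 + p * t + (2:ℝ) ^ (2 - p) * |t| ^ p := by
  set C : ℝ := (2:ℝ) ^ (2 - p) with hCdef
  have hC1 : (1:ℝ) ≤ C := Real.one_le_rpow one_le_two (by linarith)
  have hq0 : (0:ℝ) ≤ p - 1 := by linarith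
  have hq1 : p - 1 ≤ 1 := by linarith
  have hpd : ∀ x : ℝ, HasDerivAt (fun y : ℝ => y ^ p) (p * x ^ (p-1)) x :=
    fun x => Real.hasDerivAt_rpow_const (Or.inr hp1.le)
  rcases le_total 0 t with ht | ht
  · -- t ≥ 0
    have hf : ∀ x : ℝ, HasDerivAt (fun y => 1 + p * y + C * y ^ p - (1+y) ^ p)
        ((0 + p * 1 + C * (p * x ^ (p-1))) - p * (1+x) ^ (p-1) * 1) x := by
      intro x
      have h2 := (Real.hasDerivAt_rpow_const (x := 1+x) (p := p) (Or.inr hp1.le)).comp x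
        ((hasDerivAt_id x).const_add 1)
      exact (((hasDerivAt_const x 1).add ((hasDerivAt_id x).const_mul p)).add
        ((hpd x).const_mul C)).sub h2
    have hmono : MonotoneOn (fun y => 1 + p * y + C * y ^ p - (1+y) ^ p) (Ici 0) := by
      apply monotoneOn_of_deriv_nonneg (convex_Ici 0)
        (fun x _ => (hf x).continuousAt.continuousWithinAt)
        (fun x _ => (hf x).differentiableAt.differentiableWithinAt)
      intro x hx
      rw [interior_Ici, mem_Ioi] at hx
      rw [(hf x).deriv]
      have hs : (1 + x) ^ (p-1) ≤ 1 ^ (p-1) + x ^ (p-1) :=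
        my_subadd hq0 hq1 zero_le_one hx.le
      rw [Real.one_rpow] at hs
      have hx1 : (0:ℝ) ≤ x ^ (p-1) := Real.rpow_nonneg hx.le _
      have hp0 : (0:ℝ) < p := by linarith
      nlinarith [mul_le_mul_of_nonneg_left hs hp0.le,
        mul_le_mul_of_nonneg_right hC1 (mul_nonneg hp0.le hx1)]
    have h0 := hmono (self_mem_Ici) (mem_Ici.2 ht) ht
    simp only [mul_zero, add_zero, Real.zero_rpow (by positivity : p ≠ 0),
      Real.one_rpow] at h0
    rw [abs_of_nonneg (by linarith : (0:ℝ) ≤ 1 + t), abs_of_nonneg ht]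
    linarith
  · rcases le_total (-1) t with ht1 | ht1
    · -- -1 ≤ t ≤ 0 ; s = -t ∈ [0,1]
      set s : ℝ := -t with hs
      have hs0 : 0 ≤ s := by simp [hs]; linarith
      have hs1 : s ≤ 1 := by simp [hs]; linarith
      have hf : ∀ x : ℝ, HasDerivAt (fun y => 1 - p * y + C * y ^ p - (1-y) ^ p)
          ((0 - p * 1 + C * (p * x ^ (p-1))) - p * (1-x) ^ (p-1) * (-1)) x := by
        intro x
        have h2 := (Real.hasDerivAt_rpow_const (x := 1-x) (p := p) (Or.inr hp1.le)).comp x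
          ((hasDerivAt_id x).const_sub 1)
        exact (((hasDerivAt_const x 1).sub ((hasDerivAt_id x).const_mul p)).add
          ((hpd x).const_mul C)).sub h2
      have hmono : MonotoneOn (fun y => 1 - p * y + C * y ^ p - (1-y) ^ p) (Icc 0 1) := by
        apply monotoneOn_of_deriv_nonneg (convex_Icc 0 1)
          (fun x _ => (hf x).continuousAt.continuousWithinAt)
          (fun x _ => (hf x).differentiableAt.differentiableWithinAt)
        intro x hx
        rw [interior_Icc, mem_Ioo] at hx
        rw [(hf x).deriv]
        have hsub : (1:ℝ) ^ (p-1) ≤ x ^ (p-1) + (1-x) ^ (p-1) := by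
          have := my_subadd hq0 hq1 hx.1.le (by linarith : (0:ℝ) ≤ 1 - x)
          simpa [show x + (1-x) = 1 by ring] using this
        rw [Real.one_rpow] at hsub
        have hx1 : (0:ℝ) ≤ x ^ (p-1) := Real.rpow_nonneg hx.1.le _
        have hp0 : (0:ℝ) < p := by linarith
        nlinarith [mul_le_mul_of_nonneg_left hsub hp0.le,
          mul_le_mul_of_nonneg_right hC1 (mul_nonneg hp0.le hx1)]
      have h0 := hmono (Set.mem_Icc.2 ⟨le_refl 0, zero_le_one⟩) (Set.mem_Icc.2 ⟨hs0, hs1⟩) hs0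
      simp only [mul_zero, sub_zero, Real.zero_rpow (by positivity : p ≠ 0),
        Real.one_rpow] at h0
      rw [abs_of_nonneg (by linarith : (0:ℝ) ≤ 1 + t), abs_of_nonpos ht]
      have : (1 - s) = 1 + t := by rw [hs]; ring
      rw [this] at h0
      have h0' : (1 + t) ^ p ≤ 1 - p * s + C * s ^ p := by linarith
      rw [hs] at h0'
      linarith [h0']
    · -- t ≤ -1 ; u = -t ≥ 1
      set u : ℝ := -t with hu
      have hu1 : 1 ≤ u := by simp [hu]; linarith
      have hf : ∀ x : ℝ, HasDerivAt (fun y => 1 - p * y + C * y ^ p - (y-1) ^ p)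
          ((0 - p * 1 + C * (p * x ^ (p-1))) - p * (x-1) ^ (p-1) * 1) x := by
        intro x
        have h2 := (Real.hasDerivAt_rpow_const (x := x-1) (p := p) (Or.inr hp1.le)).comp x
          ((hasDerivAt_id x).sub_const 1)
        exact (((hasDerivAt_const x 1).sub ((hasDerivAt_id x).const_mul p)).add
          ((hpd x).const_mul C)).sub h2
      have hmono : MonotoneOn (fun y => 1 - p * y + C * y ^ p - (y-1) ^ p) (Ici 1) := by
        apply monotoneOn_of_deriv_nonneg (convex_Ici 1)
          (fun x _ => (hf x).continuousAt.continuousWithinAt)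
          (fun x _ => (hf x).differentiableAt.differentiableWithinAt)
        intro x hx
        rw [interior_Ici, mem_Ioi] at hx
        rw [(hf x).deriv]
        have hj := my_jensen hq0 hq1 (by linarith : (0:ℝ) ≤ x - 1)
        rw [show (1:ℝ) - (p-1) = 2 - p by ring, show (1:ℝ) + (x-1) = x by ring] at hj
        -- hj : 1 + (x-1)^(p-1) ≤ C * x^(p-1)
        nlinarith
      have h0 := hmono (self_mem_Ici) (mem_Ici.2 hu1) hu1
      simp only [mul_one, Real.one_rpow, sub_self,
        Real.zero_rpow (by positivity : p ≠ 0)] at h0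
      -- h0 : 1 - p + C - 0 ≤ f u ... need f 1 ≥ 0
      have hf1 : (0:ℝ) ≤ 1 - p + C - 0 := by linarith
      have h0' : (u - 1) ^ p ≤ 1 - p * u + C * u ^ p := by
        have := le_trans hf1 h0
        linarith
      rw [abs_of_nonpos (by linarith : 1 + t ≤ 0), abs_of_nonpos ht]
      have he : -(1 + t) = u - 1 := by simp [hu]; ring
      rw [he]
      have he2 : -t = u := by simp [hu]
      rw [he2]
      have hpt : p * t = -(p * u) := by rw [hu]; ring
      linarith

lemma my_pos (p : ℝ) (hp1 : 1 < p) (hp2 : p ≤ 2) (a b : ℝ) (ha : 0 < a) :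
    |a + b| ^ p ≤ a ^ p + p * a ^ (p - 1) * b + (2:ℝ) ^ (2 - p) * |b| ^ p := by
  set C : ℝ := (2:ℝ) ^ (2 - p)
  have hkey := my_key p hp1 hp2 (b / a)
  have hap : (0:ℝ) < a ^ p := Real.rpow_pos_of_pos ha p
  have h1 : a ^ p * |1 + b / a| ^ p = |a + b| ^ p := by
    rw [← Real.mul_rpow (le_of_lt ha) (abs_nonneg _)]
    congr 1
    rw [show a * |1 + b / a| = |a| * |1 + b / a| from by rw [abs_of_pos ha], ← abs_mul]
    congr 1
    field_simp
  have h2 : a ^ p * (b / a) = a ^ (p-1) * b := by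
    rw [show p = (p-1) + 1 by ring, Real.rpow_add ha, Real.rpow_one]
    field_simp
    ring
  have h3 : a ^ p * |b / a| ^ p = |b| ^ p := by
    rw [← Real.mul_rpow (le_of_lt ha) (abs_nonneg _)]
    congr 1
    rw [abs_div, abs_of_pos ha]
    field_simp
  have := mul_le_mul_of_nonneg_left hkey hap.le
  calc |a + b| ^ p = a ^ p * |1 + b / a| ^ p := h1.symm
    _ ≤ a ^ p * (1 + p * (b / a) + C * |b / a| ^ p) := this
    _ = a ^ p + p * (a ^ p * (b / a)) + C * (a ^ p * |b / a| ^ p) := by ring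
    _ = a ^ p + p * a ^ (p-1) * b + C * |b| ^ p := by rw [h2, h3]; ring

/-- For `1 < p ≤ 2` and all reals `a, b`,
`|a + b|^p ≤ |a|^p + p · sgn(a) · |a|^{p−1} · b + 2^{2−p} · |b|^p`. -/
theorem stmt_14 (p a b : ℝ) (hp1 : 1 < p) (hp2 : p ≤ 2) :
    |a + b| ^ p ≤ |a| ^ p + p * Real.sign a * |a| ^ (p - 1) * b
      + (2 : ℝ) ^ (2 - p) * |b| ^ p := by
  rcases lt_trichotomy a 0 with ha | ha | ha
  · have h := my_pos p hp1 hp2 (-a) (-b) (by linarith)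
    rw [show -a + -b = -(a+b) by ring, abs_neg, abs_neg] at h
    rw [Real.sign_of_neg ha, abs_of_neg ha]
    calc |a + b| ^ p ≤ (-a) ^ p + p * (-a) ^ (p-1) * (-b) + (2:ℝ) ^ (2-p) * |b| ^ p := h
      _ = (-a) ^ p + p * (-1) * (-a) ^ (p-1) * b + (2:ℝ) ^ (2-p) * |b| ^ p := by ring
  · subst ha
    rw [Real.sign_zero, abs_zero, Real.zero_rpow (by positivity : p ≠ 0), zero_add]
    have hC1 : (1:ℝ) ≤ (2:ℝ) ^ (2-p) := Real.one_le_rpow one_le_two (by linarith)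
    have : (0:ℝ) ≤ |b| ^ p := Real.rpow_nonneg (abs_nonneg b) p
    nlinarith
  · have h := my_pos p hp1 hp2 a b ha
    rw [Real.sign_of_pos ha, abs_of_pos ha]
    calc |a + b| ^ p ≤ a ^ p + p * a ^ (p-1) * b + (2:ℝ) ^ (2-p) * |b| ^ p := h
      _ = a ^ p + p * 1 * a ^ (p-1) * b + (2:ℝ) ^ (2-p) * |b| ^ p := by ring
end

section
/- Let δ ∈ (0,1], let (𝓕_k)_{k ≥ 0} be a filtration, and let (e_k)_{k ≥ 0} be an adapted sequence of nonnegative integrable real random variables such that, almost surely for every k (with 𝓕_{−1} the trivial σ-algebra), 𝔼[e_k | 𝓕_{k−1}] ≤ ε̃ and 𝔼[ |e_k − 𝔼[e_k | 𝓕_{k−1}]|^{1+δ} | 𝓕_{k−1} ] ≤ Υ, where ε̃ ≥ 0 and Υ > 0. Then for every integer T ≥ 1 and every real c > 0: P( Σ_{k=0}^{T−1} e_k > (ε̃ + c) T ) ≤ 2^{1−δ} · Υ · c^{−(1+δ)} · T^{−δ}. -/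
open MeasureTheory

namespace Stmt16Aux


lemma rpow_subadd {a b q : ℝ} (ha : 0 ≤ a) (hb : 0 ≤ b) (hq : 0 ≤ q) (hq1 : q ≤ 1) :
    (a + b) ^ q ≤ a ^ q + b ^ q := by
  have h := NNReal.rpow_add_le_add_rpow a.toNNReal b.toNNReal hq hq1
  have h2 := NNReal.coe_le_coe.mpr h
  push_cast at h2
  rwa [Real.coe_toNNReal a ha, Real.coe_toNNReal b hb] at h2

lemma cont_rpow {q : ℝ} (hq : 0 ≤ q) : Continuous fun x : ℝ => x ^ q :=
  continuous_iff_continuousAt.mpr fun x => Real.continuousAt_rpow_const x q (Or.inr hq)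

lemma one_le_C {p : ℝ} (hp2 : p ≤ 2) : (1 : ℝ) ≤ 2 ^ (2 - p) :=
  Real.one_le_rpow one_le_two (by linarith)


/-- case `0 ≤ t` -/
lemma core_pos (hp1 : 1 < p) (hp2 : p ≤ 2) {t : ℝ} (ht : 0 ≤ t) :
    (1 + t) ^ p ≤ 1 + p * t + 2 ^ (2 - p) * t ^ p := by
  set C : ℝ := 2 ^ (2 - p) with hC
  have hp0 : (0:ℝ) < p := by linarith
  set F : ℝ → ℝ := fun t => 1 + p * t + C * t ^ p - (1 + t) ^ p with hF
  have hderiv : ∀ x : ℝ, 0 < x →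
      HasDerivAt F (p + C * (p * x ^ (p - 1)) - 1 * p * (1 + x) ^ (p - 1)) x := by
    intro x hx
    have h1 : HasDerivAt (fun y : ℝ => 1 + p * y) p x := by
      simpa using ((hasDerivAt_id x).const_mul p).const_add 1
    have h2 : HasDerivAt (fun y : ℝ => C * y ^ p) (C * (p * x ^ (p - 1))) x :=
      (Real.hasDerivAt_rpow_const (Or.inl hx.ne')).const_mul C
    have h3 : HasDerivAt (fun y : ℝ => (1 + y) ^ p) (1 * p * (1 + x) ^ (p - 1)) x :=
      ((hasDerivAt_id x).const_add 1).rpow_const (Or.inr hp1.le)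
    exact (h1.add h2).sub h3
  have hmono : MonotoneOn F (Set.Ici (0:ℝ)) := by
    apply monotoneOn_of_deriv_nonneg (convex_Ici 0)
    · have : Continuous F := by
        apply Continuous.sub
        · exact (continuous_const.add (continuous_const.mul continuous_id)).add
            (continuous_const.mul (cont_rpow hp0.le))
        · exact (cont_rpow hp0.le).comp (continuous_const.add continuous_id)
      exact this.continuousOn
    · intro x hx
      rw [interior_Ici] at hx
      exact ((hderiv x hx).differentiableAt).differentiableWithinAt
    · intro x hx
      rw [interior_Ici] at hx
      rw [(hderiv x hx).deriv]
      have hsub : (1 + x) ^ (p - 1) ≤ 1 + C * x ^ (p - 1) := by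
        have h := rpow_subadd (zero_le_one) hx.le (by linarith : (0:ℝ) ≤ p - 1)
          (by linarith : p - 1 ≤ 1)
        rw [Real.one_rpow] at h
        have hx1 : x ^ (p - 1) ≤ C * x ^ (p - 1) := by
          nlinarith [Real.rpow_nonneg hx.le (p - 1), one_le_C hp2]
        linarith
      nlinarith [mul_le_mul_of_nonneg_left hsub hp0.le]
  have h0 : F 0 = 0 := by
    simp [hF, Real.zero_rpow hp0.ne', Real.one_rpow]
  have := hmono (Set.self_mem_Ici) (Set.mem_Ici.mpr ht) ht
  rw [h0] at this
  simp only [hF] at this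
  linarith







lemma C_mul_half {p x : ℝ} (hx0 : 0 < x) :
    (2:ℝ) ^ (2 - p) * x ^ (p - 1 - 1) = (x / 2) ^ (p - 1 - 1) := by
  have hmul : (2:ℝ) ^ (2 - p) * (2:ℝ) ^ (p - 1 - 1) = 1 := by
    rw [← Real.rpow_add two_pos, show (2 - p) + (p - 1 - 1) = (0:ℝ) by ring, Real.rpow_zero]
  have h2q : ((2:ℝ) ^ (p - 1 - 1)) ≠ 0 := (Real.rpow_pos_of_pos two_pos _).ne'
  rw [Real.div_rpow hx0.le two_pos.le, eq_div_iff h2q]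
  linear_combination x ^ (p - 1 - 1) * hmul

/-- `ψ ≥ 0` on `[1,∞)` -/
lemma psi_nonneg {p : ℝ} (hp1 : 1 < p) (hp2 : p ≤ 2) {s : ℝ} (hs : 1 ≤ s) :
    0 ≤ 2 ^ (2 - p) * s ^ (p - 1) - 1 - (s - 1) ^ (p - 1) := by
  set C : ℝ := 2 ^ (2 - p) with hC
  set ψ : ℝ → ℝ := fun s => C * s ^ (p - 1) - 1 - (s - 1) ^ (p - 1) with hψ
  have hq0 : (0:ℝ) ≤ p - 1 := by linarith
  have hψ2 : ψ 2 = 0 := by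
    have h2 : C * (2:ℝ) ^ (p - 1) = 2 := by
      rw [hC, ← Real.rpow_add two_pos, show (2 - p) + (p - 1) = (1:ℝ) by ring, Real.rpow_one]
    simp only [hψ]
    rw [show (2:ℝ) - 1 = 1 by norm_num, Real.one_rpow, h2]
    ring
  have hcont : Continuous ψ := by
    apply Continuous.sub
    · exact (continuous_const.mul (cont_rpow hq0)).sub continuous_const
    · exact (cont_rpow hq0).comp (continuous_id.sub continuous_const)
  have hderiv : ∀ x : ℝ, 1 < x →
      HasDerivAt ψ (C * ((p - 1) * x ^ (p - 1 - 1)) - 1 * (p - 1) * (x - 1) ^ (p - 1 - 1)) x := by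
    intro x hx
    have hxne : x ≠ 0 := by intro h; rw [h] at hx; linarith
    have hx1ne : x - 1 ≠ 0 := ne_of_gt (by linarith)
    have h1 : HasDerivAt (fun y : ℝ => C * y ^ (p - 1)) (C * ((p - 1) * x ^ (p - 1 - 1))) x :=
      (Real.hasDerivAt_rpow_const (Or.inl hxne)).const_mul C
    have h2 : HasDerivAt (fun y : ℝ => (y - 1) ^ (p - 1))
        (1 * (p - 1) * (x - 1) ^ (p - 1 - 1)) x :=
      ((hasDerivAt_id x).sub_const 1).rpow_const (Or.inl hx1ne)
    exact (h1.sub_const 1).sub h2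
  have hanti : AntitoneOn ψ (Set.Icc (1:ℝ) 2) := by
    apply antitoneOn_of_deriv_nonpos (convex_Icc 1 2) hcont.continuousOn
    · intro x hx
      rw [interior_Icc] at hx
      exact ((hderiv x hx.1).differentiableAt).differentiableWithinAt
    · intro x hx
      rw [interior_Icc] at hx
      obtain ⟨hxa, hxb⟩ := hx
      rw [(hderiv x hxa).deriv]
      have hle : C * x ^ (p - 1 - 1) ≤ (x - 1) ^ (p - 1 - 1) := by
        rw [hC, C_mul_half (by linarith : (0:ℝ) < x)]
        exact Real.rpow_le_rpow_of_nonpos (by linarith) (by linarith) (by linarith)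
      nlinarith
  have hmono : MonotoneOn ψ (Set.Ici (2:ℝ)) := by
    apply monotoneOn_of_deriv_nonneg (convex_Ici 2) hcont.continuousOn
    · intro x hx
      rw [interior_Ici] at hx
      exact ((hderiv x (by linarith [Set.mem_Ioi.mp hx])).differentiableAt).differentiableWithinAt
    · intro x hx
      rw [interior_Ici] at hx
      have hx2 : (2:ℝ) < x := hx
      rw [(hderiv x (by linarith)).deriv]
      clear hx
      have hle : (x - 1) ^ (p - 1 - 1) ≤ C * x ^ (p - 1 - 1) := by
        rw [hC, C_mul_half (by linarith : (0:ℝ) < x)]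
        exact Real.rpow_le_rpow_of_nonpos (by linarith) (by linarith) (by linarith)
      nlinarith
  rcases le_total s 2 with h2 | h2
  · have := hanti (Set.mem_Icc.mpr ⟨hs, h2⟩) (Set.mem_Icc.mpr ⟨one_le_two, le_refl 2⟩) h2
    rw [hψ2] at this
    simpa only [hψ] using this
  · have := hmono (Set.mem_Ici.mpr (le_refl 2)) (Set.mem_Ici.mpr h2) h2
    rw [hψ2] at this
    simpa only [hψ] using this

/-- case `t ≤ -1`, with `s = -t ≥ 1` -/
lemma core_neg {p : ℝ} (hp1 : 1 < p) (hp2 : p ≤ 2) {s : ℝ} (hs : 1 ≤ s) :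
    (s - 1) ^ p ≤ 1 - p * s + 2 ^ (2 - p) * s ^ p := by
  set C : ℝ := 2 ^ (2 - p) with hC
  have hp0 : (0:ℝ) < p := by linarith
  set F : ℝ → ℝ := fun s => 1 - p * s + C * s ^ p - (s - 1) ^ p with hF
  have hderiv : ∀ x : ℝ, 1 < x →
      HasDerivAt F (-p + C * (p * x ^ (p - 1)) - 1 * p * (x - 1) ^ (p - 1)) x := by
    intro x hx
    have hxne : x ≠ 0 := by intro h; rw [h] at hx; linarith
    have h1 : HasDerivAt (fun y : ℝ => 1 - p * y) (-p) x := by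
      simpa using ((hasDerivAt_id x).const_mul p).const_sub 1
    have h2 : HasDerivAt (fun y : ℝ => C * y ^ p) (C * (p * x ^ (p - 1))) x :=
      (Real.hasDerivAt_rpow_const (Or.inl hxne)).const_mul C
    have h3 : HasDerivAt (fun y : ℝ => (y - 1) ^ p) (1 * p * (x - 1) ^ (p - 1)) x :=
      ((hasDerivAt_id x).sub_const 1).rpow_const (Or.inr hp1.le)
    exact (h1.add h2).sub h3
  have hmono : MonotoneOn F (Set.Ici (1:ℝ)) := by
    apply monotoneOn_of_deriv_nonneg (convex_Ici 1)
    · have : Continuous F := by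
        apply Continuous.sub
        · exact (continuous_const.sub (continuous_const.mul continuous_id)).add
            (continuous_const.mul (cont_rpow hp0.le))
        · exact (cont_rpow hp0.le).comp (continuous_id.sub continuous_const)
      exact this.continuousOn
    · intro x hx
      rw [interior_Ici] at hx
      exact ((hderiv x hx).differentiableAt).differentiableWithinAt
    · intro x hx
      rw [interior_Ici] at hx
      rw [(hderiv x hx).deriv]
      have hψ := psi_nonneg hp1 hp2 (le_of_lt hx)
      nlinarith
  have h1 : F 1 = 1 - p + C := by
    simp only [hF]
    rw [sub_self, Real.zero_rpow hp0.ne', Real.one_rpow]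
    ring
  have hF1 : 0 ≤ F 1 := by
    rw [h1]; have := one_le_C (p := p) hp2; rw [← hC] at this; linarith
  have := hmono (Set.mem_Ici.mpr (le_refl 1)) (Set.mem_Ici.mpr hs) hs
  simp only [hF] at this h1 ⊢
  have h0 : (0:ℝ) ≤ 1 - p * s + C * s ^ p - (s - 1) ^ p := le_trans hF1 this
  linarith




/-- case `t ∈ [-1,0]`, written with `u = -t ∈ [0,1]` -/
lemma core_mid {p : ℝ} (hp1 : 1 < p) (hp2 : p ≤ 2) {u : ℝ} (hu0 : 0 ≤ u) (hu1 : u ≤ 1) :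
    (1 - u) ^ p ≤ 1 - p * u + 2 ^ (2 - p) * u ^ p := by
  set C : ℝ := 2 ^ (2 - p) with hC
  have hp0 : (0:ℝ) < p := by linarith
  set F : ℝ → ℝ := fun u => 1 - p * u + C * u ^ p - (1 - u) ^ p with hF
  have hderiv : ∀ x : ℝ, 0 < x → x < 1 →
      HasDerivAt F (-p + C * (p * x ^ (p - 1)) - -1 * p * (1 - x) ^ (p - 1)) x := by
    intro x hx hx1
    have h1 : HasDerivAt (fun y : ℝ => 1 - p * y) (-p) x := by
      simpa using (((hasDerivAt_id x).const_mul p).const_sub 1)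
    have h2 : HasDerivAt (fun y : ℝ => C * y ^ p) (C * (p * x ^ (p - 1))) x :=
      (Real.hasDerivAt_rpow_const (Or.inl hx.ne')).const_mul C
    have h3 : HasDerivAt (fun y : ℝ => (1 - y) ^ p) (-1 * p * (1 - x) ^ (p - 1)) x := by
      have hinner : HasDerivAt (fun y : ℝ => 1 - y) (-1) x := by
        simpa using (hasDerivAt_id x).const_sub 1
      exact hinner.rpow_const (Or.inl (ne_of_gt (by linarith : (0:ℝ) < 1 - x)))
    exact (h1.add h2).sub h3
  have hmono : MonotoneOn F (Set.Icc (0:ℝ) 1) := by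
    apply monotoneOn_of_deriv_nonneg (convex_Icc 0 1)
    · have : Continuous F := by
        apply Continuous.sub
        · exact (continuous_const.sub (continuous_const.mul continuous_id)).add
            (continuous_const.mul (cont_rpow hp0.le))
        · exact (cont_rpow hp0.le).comp (continuous_const.sub continuous_id)
      exact this.continuousOn
    · intro x hx
      rw [interior_Icc] at hx
      exact ((hderiv x hx.1 hx.2).differentiableAt).differentiableWithinAt
    · intro x hx
      rw [interior_Icc] at hx
      obtain ⟨hxa, hxb⟩ := hx
      rw [(hderiv x hxa hxb).deriv]
      have hsub : 1 ≤ x ^ (p - 1) + (1 - x) ^ (p - 1) := by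
        have h := rpow_subadd hxa.le (by linarith : (0:ℝ) ≤ 1 - x)
          (by linarith : (0:ℝ) ≤ p - 1) (by linarith : p - 1 ≤ 1)
        rw [show x + (1 - x) = 1 by ring, Real.one_rpow] at h
        linarith
      have hx1' : x ^ (p - 1) ≤ C * x ^ (p - 1) := by
        nlinarith [Real.rpow_nonneg hxa.le (p - 1), one_le_C hp2]
      nlinarith [mul_le_mul_of_nonneg_left hsub hp0.le]
  have h0 : F 0 = 0 := by
    simp [hF, Real.zero_rpow hp0.ne', Real.one_rpow]
  have := hmono (Set.mem_Icc.mpr ⟨le_refl 0, zero_le_one⟩) (Set.mem_Icc.mpr ⟨hu0, hu1⟩) hu0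
  rw [h0] at this
  simp only [hF] at this
  linarith

lemma core {p : ℝ} (hp1 : 1 < p) (hp2 : p ≤ 2) (t : ℝ) :
    |1 + t| ^ p ≤ 1 + p * t + 2 ^ (2 - p) * |t| ^ p := by
  rcases le_total 0 t with ht | ht
  · rw [abs_of_nonneg (by linarith), abs_of_nonneg ht]
    exact core_pos hp1 hp2 ht
  rcases le_total (-1) t with ht1 | ht1
  · rw [abs_of_nonneg (by linarith), abs_of_nonpos ht]
    have := core_mid hp1 hp2 (u := -t) (by linarith) (by linarith)
    calc (1 + t) ^ p = (1 - (-t)) ^ p := by ring_nf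
      _ ≤ 1 - p * (-t) + 2 ^ (2 - p) * (-t) ^ p := this
      _ = 1 + p * t + 2 ^ (2 - p) * (-t) ^ p := by ring
  · rw [abs_of_nonpos (by linarith), abs_of_nonpos ht]
    have := core_neg hp1 hp2 (s := -t) (by linarith)
    calc (-(1 + t)) ^ p = (-t - 1) ^ p := by ring_nf
      _ ≤ 1 - p * (-t) + 2 ^ (2 - p) * (-t) ^ p := this
      _ = 1 + p * t + 2 ^ (2 - p) * (-t) ^ p := by ring

/-- key pointwise inequality -/
lemma key {p : ℝ} (hp1 : 1 < p) (hp2 : p ≤ 2) (x y : ℝ) :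
    |x + y| ^ p ≤ |x| ^ p + p * Real.sign x * |x| ^ (p - 1) * y + 2 ^ (2 - p) * |y| ^ p := by
  have hp0 : (0:ℝ) < p := by linarith
  have key_pos : ∀ x y : ℝ, 0 < x →
      |x + y| ^ p ≤ |x| ^ p + p * Real.sign x * |x| ^ (p - 1) * y + 2 ^ (2 - p) * |y| ^ p := by
    intro x y hx
    have hxp : (0:ℝ) < x ^ p := Real.rpow_pos_of_pos hx p
    have h := core hp1 hp2 (y / x)
    have h2 := mul_le_mul_of_nonneg_left h hxp.le
    rw [Real.sign_of_pos hx, abs_of_pos hx]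
    calc |x + y| ^ p = x ^ p * |1 + y / x| ^ p := by
          have hxx : x * |1 + y / x| = |x + y| := by
            nth_rewrite 1 [← abs_of_pos hx]
            rw [← abs_mul]
            congr 1
            field_simp
          rw [← hxx, Real.mul_rpow hx.le (abs_nonneg _)]
      _ ≤ x ^ p * (1 + p * (y / x) + 2 ^ (2 - p) * |y / x| ^ p) := h2
      _ = x ^ p + p * 1 * x ^ (p - 1) * y + 2 ^ (2 - p) * |y| ^ p := by
          have e1 : x ^ p * (p * (y / x)) = p * 1 * x ^ (p - 1) * y := by
            rw [show p - 1 = p + (-1) by ring, Real.rpow_add hx, Real.rpow_neg_one]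
            field_simp
          have e2 : x ^ p * (2 ^ (2 - p) * |y / x| ^ p) = 2 ^ (2 - p) * |y| ^ p := by
            rw [abs_div, Real.div_rpow (abs_nonneg _) (abs_nonneg _), abs_of_pos hx]
            field_simp
          rw [mul_add, mul_add, e1, e2, mul_one]
  rcases lt_trichotomy x 0 with hx | hx | hx
  · have := key_pos (-x) (-y) (by linarith)
    rw [show -x + -y = -(x + y) by ring, abs_neg, abs_neg, abs_neg,
      Real.sign_of_pos (by linarith : (0:ℝ) < -x)] at this
    rw [Real.sign_of_neg hx]
    calc |x + y| ^ p ≤ |x| ^ p + p * 1 * |x| ^ (p - 1) * (-y) + 2 ^ (2 - p) * |y| ^ p := this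
      _ = |x| ^ p + p * (-1) * |x| ^ (p - 1) * y + 2 ^ (2 - p) * |y| ^ p := by ring
  · subst hx
    rw [Real.sign_zero, abs_zero, Real.zero_rpow hp0.ne', zero_add]
    have hC := one_le_C (p := p) hp2
    have hyp : (0:ℝ) ≤ |y| ^ p := Real.rpow_nonneg (abs_nonneg _) p
    nlinarith
  · exact key_pos x y hx




lemma measurable_real_sign : Measurable Real.sign := by
  have h : Real.sign = fun r : ℝ => if r < 0 then (-1:ℝ) else if 0 < r then 1 else 0 := by
    funext r; rfl
  rw [h]
  exact Measurable.ite measurableSet_Iio measurable_const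
    (Measurable.ite measurableSet_Ioi measurable_const measurable_const)

lemma abs_sign_le (r : ℝ) : |Real.sign r| ≤ 1 := by
  rcases Real.sign_apply_eq r with h | h | h <;> rw [h] <;> norm_num

/-- von Bahr–Esseen type inequality for martingale difference sequences. -/
lemma vbe {Ω : Type*} {m0 : MeasurableSpace Ω} {ℙ : Measure Ω} [IsProbabilityMeasure ℙ]
    (ℱ : Filtration ℕ m0) {p Υ : ℝ} (hp1 : 1 < p) (hp2 : p ≤ 2) (hΥ : 0 < Υ)
    (d : ℕ → Ω → ℝ) (hd_meas : ∀ k, StronglyMeasurable[ℱ k] (d k))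
    (hd_int : ∀ k, Integrable (d k) ℙ)
    (hdp_int : ∀ k, Integrable (fun ω => |d k ω| ^ p) ℙ)
    (hdp_bound : ∀ k, ∫ ω, |d k ω| ^ p ∂ℙ ≤ Υ)
    (hd_cond : ∀ k, ℙ[d (k + 1)|ℱ k] =ᵐ[ℙ] 0) :
    ∀ n : ℕ, 1 ≤ n →
      Integrable (fun ω => |∑ k ∈ Finset.range n, d k ω| ^ p) ℙ ∧
        ∫ ω, |∑ k ∈ Finset.range n, d k ω| ^ p ∂ℙ ≤ 2 ^ (2 - p) * Υ * n := by
  have hC1 : (1:ℝ) ≤ 2 ^ (2 - p) := one_le_C hp2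
  have hp0 : (0:ℝ) < p := by linarith
  have hq1 : (0:ℝ) ≤ p - 1 := by linarith
  intro n hn
  induction n, hn using Nat.le_induction with
  | base =>
    constructor
    · have := hdp_int 0
      simpa only [Finset.sum_range_one] using this
    · have h1 : ∫ ω, |∑ k ∈ Finset.range 1, d k ω| ^ p ∂ℙ = ∫ ω, |d 0 ω| ^ p ∂ℙ := by
        congr 1; funext ω; rw [Finset.sum_range_one]
      rw [h1, Nat.cast_one, mul_one]
      have h2 : Υ ≤ 2 ^ (2 - p) * Υ := by nlinarith
      exact (hdp_bound 0).trans h2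
  | succ n hn ih =>
    obtain ⟨hInt, hBnd⟩ := ih
    obtain ⟨m, rfl⟩ : ∃ m, n = m + 1 := ⟨n - 1, (Nat.succ_pred_eq_of_pos hn).symm⟩
    set C : ℝ := 2 ^ (2 - p) with hCdef
    set f : Ω → ℝ := fun ω => ∑ k ∈ Finset.range (m + 1), d k ω with hfdef
    set D : Ω → ℝ := d (m + 1) with hDdef
    have hfun : (fun ω => |∑ k ∈ Finset.range (m + 1 + 1), d k ω| ^ p)
        = fun ω => |f ω + D ω| ^ p := by
      funext ω; rw [Finset.sum_range_succ]
    -- conjugate exponents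
    have hq_conj : (p / (p - 1)).HolderConjugate p := by
      rw [Real.holderConjugate_iff]
      constructor
      · rw [lt_div_iff₀ (by linarith)]; linarith
      · rw [inv_div]; field_simp; ring
    set g : Ω → ℝ := fun ω => p * Real.sign (f ω) * |f ω| ^ (p - 1) with hgdef
    have hf_meas : StronglyMeasurable[ℱ m] f :=
      Finset.stronglyMeasurable_fun_sum _ fun k hk =>
        (hd_meas k).mono (ℱ.mono (Nat.lt_succ_iff.mp (Finset.mem_range.mp hk)))
    have hg_meas : StronglyMeasurable[ℱ m] g := by
      have hfm : Measurable[ℱ m] f := hf_meas.measurable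
      have h1 : Measurable[ℱ m] fun ω => Real.sign (f ω) :=
        fun s hs => hfm (measurable_real_sign hs)
      have h2 : Measurable[ℱ m] fun ω => |f ω| ^ (p - 1) :=
        fun s hs => hfm (((cont_rpow hq1).comp continuous_abs).measurable hs)
      have hgm : Measurable[ℱ m] g := (measurable_const.mul h1).mul h2
      exact hgm.stronglyMeasurable
    have hD_meas : StronglyMeasurable[ℱ (m + 1)] D := hd_meas (m + 1)
    have hgd_meas : StronglyMeasurable (fun ω => g ω * D ω) :=
      (hg_meas.mono (ℱ.le m)).mul (hD_meas.mono (ℱ.le (m + 1)))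
    -- pointwise bound for the cross term (Young's inequality)
    have hbound_pt : ∀ ω,
        ‖g ω * D ω‖ ≤ p * (|f ω| ^ p / (p / (p - 1)) + |D ω| ^ p / p) := by
      intro ω
      have hy := Real.young_inequality_of_nonneg
        (Real.rpow_nonneg (abs_nonneg (f ω)) (p - 1)) (abs_nonneg (D ω)) hq_conj
      rw [← Real.rpow_mul (abs_nonneg (f ω)),
        show (p - 1) * (p / (p - 1)) = p by
          rw [mul_comm, div_mul_cancel₀ _ (ne_of_gt (by linarith : (0:ℝ) < p - 1))]] at hy
      have h2 : |g ω| ≤ p * |f ω| ^ (p - 1) := by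
        have hs := abs_sign_le (f ω)
        have hrn : (0:ℝ) ≤ |f ω| ^ (p - 1) := Real.rpow_nonneg (abs_nonneg _) _
        calc |g ω| = p * |Real.sign (f ω)| * |f ω| ^ (p - 1) := by
              rw [hgdef, abs_mul, abs_mul, abs_of_pos hp0,
                abs_of_nonneg hrn]
          _ ≤ p * 1 * |f ω| ^ (p - 1) :=
              mul_le_mul_of_nonneg_right (mul_le_mul_of_nonneg_left hs hp0.le) hrn
          _ = p * |f ω| ^ (p - 1) := by ring
      calc ‖g ω * D ω‖ = |g ω| * |D ω| := by rw [Real.norm_eq_abs, abs_mul]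
        _ ≤ (p * |f ω| ^ (p - 1)) * |D ω| :=
            mul_le_mul_of_nonneg_right h2 (abs_nonneg _)
        _ = p * (|f ω| ^ (p - 1) * |D ω|) := by ring
        _ ≤ p * (|f ω| ^ p / (p / (p - 1)) + |D ω| ^ p / p) :=
            mul_le_mul_of_nonneg_left hy hp0.le
    have hgd_int : Integrable (fun ω => g ω * D ω) ℙ :=
      Integrable.mono' (((hInt.div_const _).add ((hdp_int (m + 1)).div_const _)).const_mul p)
        hgd_meas.aestronglyMeasurable (Filter.Eventually.of_forall hbound_pt)
    -- the cross term has zero integral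
    have hgd_zero : ∫ ω, g ω * D ω ∂ℙ = 0 := by
      have hpull : ℙ[g * D|ℱ m] =ᵐ[ℙ] g * ℙ[D|ℱ m] :=
        condExp_mul_of_stronglyMeasurable_left hg_meas hgd_int (hd_int (m + 1))
      have hzero : ℙ[g * D|ℱ m] =ᵐ[ℙ] 0 := by
        refine hpull.trans ?_
        filter_upwards [hd_cond m] with ω hω
        simp only [Pi.mul_apply, Pi.zero_apply] at *
        rw [hω, mul_zero]
      calc ∫ ω, g ω * D ω ∂ℙ = ∫ ω, (ℙ[g * D|ℱ m]) ω ∂ℙ := (integral_condExp (ℱ.le m)).symm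
        _ = ∫ ω, (0 : Ω → ℝ) ω ∂ℙ := integral_congr_ae hzero
        _ = 0 := by simp
    -- pointwise key inequality
    have hpt : ∀ ω, |f ω + D ω| ^ p ≤ |f ω| ^ p + g ω * D ω + C * |D ω| ^ p := fun ω =>
      key hp1 hp2 (f ω) (D ω)
    have hRHS_int : Integrable (fun ω => |f ω| ^ p + g ω * D ω + C * |D ω| ^ p) ℙ :=
      (hInt.add hgd_int).add ((hdp_int (m + 1)).const_mul C)
    have haesm : AEStronglyMeasurable (fun ω => |f ω + D ω| ^ p) ℙ := by
      have hsm : StronglyMeasurable (fun ω => f ω + D ω) :=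
        (hf_meas.mono (ℱ.le m)).add (hD_meas.mono (ℱ.le (m + 1)))
      exact (((cont_rpow hp0.le).measurable).comp hsm.measurable.abs).aestronglyMeasurable
    have hInt' : Integrable (fun ω => |f ω + D ω| ^ p) ℙ := by
      refine Integrable.mono' hRHS_int haesm (Filter.Eventually.of_forall fun ω => ?_)
      rw [Real.norm_eq_abs, abs_of_nonneg (Real.rpow_nonneg (abs_nonneg _) _)]
      exact hpt ω
    have hstep : ∫ ω, |f ω + D ω| ^ p ∂ℙ ≤ C * Υ * (m + 1) + C * Υ := by
      have h4 : C * ∫ ω, |D ω| ^ p ∂ℙ ≤ C * Υ :=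
        mul_le_mul_of_nonneg_left (hdp_bound (m + 1)) (by linarith)
      calc ∫ ω, |f ω + D ω| ^ p ∂ℙ
          ≤ ∫ ω, (|f ω| ^ p + g ω * D ω + C * |D ω| ^ p) ∂ℙ :=
            integral_mono hInt' hRHS_int hpt
        _ = (∫ ω, (|f ω| ^ p + g ω * D ω) ∂ℙ) + ∫ ω, C * |D ω| ^ p ∂ℙ :=
            integral_add (hInt.add hgd_int) ((hdp_int (m + 1)).const_mul C)
        _ = (∫ ω, |f ω| ^ p ∂ℙ) + (∫ ω, g ω * D ω ∂ℙ) + C * ∫ ω, |D ω| ^ p ∂ℙ := by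
            rw [integral_add hInt hgd_int, integral_const_mul]
        _ ≤ C * Υ * (m + 1) + 0 + C * Υ := by
            rw [hgd_zero]
            push_cast at hBnd ⊢
            linarith
        _ = C * Υ * (m + 1) + C * Υ := by ring
    refine ⟨by rw [hfun]; exact hInt', ?_⟩
    have hgoal : ∫ ω, |∑ k ∈ Finset.range (m + 1 + 1), d k ω| ^ p ∂ℙ
        = ∫ ω, |f ω + D ω| ^ p ∂ℙ := by rw [hfun]
    rw [hgoal]
    refine hstep.trans ?_
    push_cast
    ring_nf
    linarith

end Stmt16Aux
open Stmt16Aux in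
/-- heavy-tailed tail bound for an adapted sequence of nonnegative errors
with conditional means at most `ε̃` and conditional centered `(1+δ)`-th moments at most
`Υ` (the case `k = 0` being with respect to the trivial σ-algebra):
`P(Σ_{k<T} e_k > (ε̃ + c) T) ≤ 2^{1−δ} Υ c^{−(1+δ)} T^{−δ}`. -/
theorem stmt_16 {Ω : Type*} {m0 : MeasurableSpace Ω} {ℙ : Measure Ω}
    [IsProbabilityMeasure ℙ] (ℱ : Filtration ℕ m0)
    (δ : ℝ) (hδ : δ ∈ Set.Ioc (0 : ℝ) 1)
    (εt Υ : ℝ) (hεt : 0 ≤ εt) (hΥ : 0 < Υ)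
    (e : ℕ → Ω → ℝ) (hadapted : Adapted ℱ e)
    (hint : ∀ k, Integrable (e k) ℙ)
    (hnonneg : ∀ k ω, 0 ≤ e k ω)
    (hmean0 : ∫ ω, e 0 ω ∂ℙ ≤ εt)
    (hmean : ∀ k, ∀ᵐ ω ∂ℙ, (ℙ[e (k + 1)|ℱ k]) ω ≤ εt)
    (hmom0int : Integrable (fun ω => |e 0 ω - ∫ ω', e 0 ω' ∂ℙ| ^ (1 + δ)) ℙ)
    (hmom0 : ∫ ω, |e 0 ω - ∫ ω', e 0 ω' ∂ℙ| ^ (1 + δ) ∂ℙ ≤ Υ)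
    (hmomint : ∀ k,
      Integrable (fun ω => |e (k + 1) ω - (ℙ[e (k + 1)|ℱ k]) ω| ^ (1 + δ)) ℙ)
    (hmom : ∀ k, ∀ᵐ ω ∂ℙ,
      (ℙ[(fun ω' => |e (k + 1) ω' - (ℙ[e (k + 1)|ℱ k]) ω'| ^ (1 + δ))|ℱ k]) ω ≤ Υ)
    (T : ℕ) (hT : 1 ≤ T) (c : ℝ) (hc : 0 < c) :
    ℙ {ω | (εt + c) * T < ∑ k ∈ Finset.range T, e k ω}
      ≤ ENNReal.ofReal (2 ^ (1 - δ) * Υ * c ^ (-(1 + δ)) * (T : ℝ) ^ (-δ)) := by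
  obtain ⟨hδ0, hδ1⟩ := hδ
  set p : ℝ := 1 + δ with hpdef
  have hp1 : 1 < p := by rw [hpdef]; linarith
  have hp2 : p ≤ 2 := by rw [hpdef]; linarith
  have hp0 : (0:ℝ) < p := by linarith
  -- centered differences
  set d : ℕ → Ω → ℝ := fun k => match k with
    | 0 => fun ω => e 0 ω - ∫ ω', e 0 ω' ∂ℙ
    | (k + 1) => fun ω => e (k + 1) ω - (ℙ[e (k + 1)|ℱ k]) ω with hddef
  have hd_meas : ∀ k, StronglyMeasurable[ℱ k] (d k) := by
    intro k
    match k with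
    | 0 =>
      exact (hadapted 0).stronglyMeasurable.sub stronglyMeasurable_const
    | (k + 1) =>
      exact (hadapted (k + 1)).stronglyMeasurable.sub
        (stronglyMeasurable_condExp.mono (ℱ.mono (Nat.le_succ k)))
  have hd_int : ∀ k, Integrable (d k) ℙ := by
    intro k
    match k with
    | 0 => exact (hint 0).sub (integrable_const _)
    | (k + 1) => exact (hint (k + 1)).sub integrable_condExp
  have hdp_int : ∀ k, Integrable (fun ω => |d k ω| ^ p) ℙ := by
    intro k
    match k with
    | 0 => exact hmom0int
    | (k + 1) => exact hmomint k
  have hdp_bound : ∀ k, ∫ ω, |d k ω| ^ p ∂ℙ ≤ Υ := by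
    intro k
    match k with
    | 0 => exact hmom0
    | (k + 1) =>
      calc ∫ ω, |d (k + 1) ω| ^ p ∂ℙ
          = ∫ ω, (ℙ[(fun ω' => |d (k + 1) ω'| ^ p)|ℱ k]) ω ∂ℙ :=
            (integral_condExp (ℱ.le k)).symm
        _ ≤ Υ := by
            have h3 := integral_mono_ae integrable_condExp (integrable_const Υ) (hmom k)
            simp only [integral_const, measure_univ, probReal_univ, ENNReal.toReal_one, smul_eq_mul,
              one_mul] at h3
            exact h3
  have hd_cond : ∀ k, ℙ[d (k + 1)|ℱ k] =ᵐ[ℙ] 0 := by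
    intro k
    have h1 : ℙ[d (k + 1)|ℱ k]
        =ᵐ[ℙ] ℙ[e (k + 1)|ℱ k] - ℙ[ℙ[e (k + 1)|ℱ k]|ℱ k] :=
      condExp_sub (hint (k + 1)) integrable_condExp (ℱ k)
    have h2 : ℙ[ℙ[e (k + 1)|ℱ k]|ℱ k] = ℙ[e (k + 1)|ℱ k] :=
      condExp_of_stronglyMeasurable (ℱ.le k) stronglyMeasurable_condExp integrable_condExp
    refine h1.trans ?_
    rw [h2, sub_self]
  obtain ⟨hST_int, hST_bnd⟩ := vbe ℱ hp1 hp2 hΥ d hd_meas hd_int hdp_int hdp_bound hd_cond T hT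
  have hTpos : (0:ℝ) < T := by exact_mod_cast Nat.lt_of_lt_of_le Nat.zero_lt_one hT
  have hcT : (0:ℝ) < c * T := by positivity
  set ε : ℝ := (c * T) ^ p with hεdef
  have hεpos : 0 < ε := Real.rpow_pos_of_pos hcT p
  -- inclusion of events
  have hsubset : {ω | (εt + c) * T < ∑ k ∈ Finset.range T, e k ω}
      ≤ᵐ[ℙ] {ω | ε ≤ |∑ k ∈ Finset.range T, d k ω| ^ p} := by
    have hae : ∀ᵐ ω ∂ℙ, ∀ k, (ℙ[e (k + 1)|ℱ k]) ω ≤ εt := ae_all_iff.mpr hmean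
    filter_upwards [hae] with ω hμ hA
    have hA' : (εt + c) * T < ∑ k ∈ Finset.range T, e k ω := hA
    have hterm : ∀ k ∈ Finset.range T, e k ω - d k ω ≤ εt := by
      intro k _
      match k with
      | 0 =>
        have : e 0 ω - d 0 ω = ∫ ω', e 0 ω' ∂ℙ := by
          show e 0 ω - (e 0 ω - ∫ ω', e 0 ω' ∂ℙ) = _
          ring
        rw [this]; exact hmean0
      | (k + 1) =>
        have : e (k + 1) ω - d (k + 1) ω = (ℙ[e (k + 1)|ℱ k]) ω := by
          show e (k + 1) ω - (e (k + 1) ω - (ℙ[e (k + 1)|ℱ k]) ω) = _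
          ring
        rw [this]; exact hμ k
    have hμsum : ∑ k ∈ Finset.range T, (e k ω - d k ω) ≤ T * εt := by
      calc ∑ k ∈ Finset.range T, (e k ω - d k ω) ≤ ∑ _k ∈ Finset.range T, εt :=
            Finset.sum_le_sum hterm
        _ = T * εt := by rw [Finset.sum_const, Finset.card_range, nsmul_eq_mul]
    have hdsum : ∑ k ∈ Finset.range T, d k ω
        = ∑ k ∈ Finset.range T, e k ω - ∑ k ∈ Finset.range T, (e k ω - d k ω) := by
      rw [← Finset.sum_sub_distrib]
      congr 1
      funext k
      ring
    have hlt : c * T ≤ ∑ k ∈ Finset.range T, d k ω := by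
      rw [hdsum]; nlinarith
    show ε ≤ |∑ k ∈ Finset.range T, d k ω| ^ p
    rw [hεdef]
    exact Real.rpow_le_rpow hcT.le (hlt.trans (le_abs_self _)) hp0.le
  -- Markov inequality
  have hmarkov := mul_meas_ge_le_integral_of_nonneg
    (Filter.Eventually.of_forall fun ω => Real.rpow_nonneg (abs_nonneg _) p) hST_int ε
  have htoReal : (ℙ {ω | ε ≤ |∑ k ∈ Finset.range T, d k ω| ^ p}).toReal
      ≤ 2 ^ (2 - p) * Υ * T / ε := by
    rw [le_div_iff₀ hεpos]
    have := hmarkov.trans hST_bnd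
    rw [measureReal_def] at this
    linarith
  calc ℙ {ω | (εt + c) * T < ∑ k ∈ Finset.range T, e k ω}
      ≤ ℙ {ω | ε ≤ |∑ k ∈ Finset.range T, d k ω| ^ p} := measure_mono_ae hsubset
    _ = ENNReal.ofReal ((ℙ {ω | ε ≤ |∑ k ∈ Finset.range T, d k ω| ^ p}).toReal) :=
        (ENNReal.ofReal_toReal (measure_ne_top _ _)).symm
    _ ≤ ENNReal.ofReal (2 ^ (2 - p) * Υ * T / ε) := ENNReal.ofReal_le_ofReal htoReal
    _ = ENNReal.ofReal (2 ^ (1 - δ) * Υ * c ^ (-p) * (T : ℝ) ^ (-δ)) := by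
        congr 1
        have hcp : (0:ℝ) < c ^ p := Real.rpow_pos_of_pos hc p
        have hTp : (0:ℝ) < (T:ℝ) ^ p := Real.rpow_pos_of_pos hTpos p
        rw [hεdef, Real.mul_rpow hc.le hTpos.le, Real.rpow_neg hc.le,
          show (1:ℝ) - δ = 2 - p by rw [hpdef]; ring,
          show -δ = 1 - p by rw [hpdef]; ring,
          Real.rpow_sub hTpos, Real.rpow_one]
        field_simp
end

section
/- Let v, b > 0, let (𝓕_k)_{k ≥ 0} be a filtration, and let (X_k)_{k ≥ 0} be an adapted sequence of integrable real random variables such that, almost surely for every k (with 𝓕_{−1} the trivial σ-algebra), 𝔼[X_k | 𝓕_{k−1}] = 0 and 𝔼[ exp(λ X_k) | 𝓕_{k−1} ] ≤ exp(λ² v² / 2) for all λ ∈ [0, 1/b]. Then for every integer T ≥ 1 and every real c ≥ 0: P( Σ_{k=0}^{T−1} X_k ≥ c T ) ≤ exp( −(1/2) · min( c²/v², c/b ) · T ). -/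
open MeasureTheory

open Filter

lemma aux_sup_ofReal {y z : ℝ} (hy : 0 ≤ y) (hz : 0 ≤ z) :
    (⨆ N : ℕ, ENNReal.ofReal (min y (N : ℝ) * z)) = ENNReal.ofReal (y * z) := by
  apply le_antisymm
  · exact iSup_le fun N => ENNReal.ofReal_le_ofReal
      (mul_le_mul_of_nonneg_right (min_le_left _ _) hz)
  · refine le_iSup_of_le ⌈y⌉₊ ?_
    rw [min_eq_left (Nat.le_ceil y)]

lemma aux_mul_le {Ω : Type*} {m0 : MeasurableSpace Ω} {μ : Measure Ω}
    [IsProbabilityMeasure μ] {m : MeasurableSpace Ω} (hm : m ≤ m0)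
    {Y Z : Ω → ℝ} (hY : StronglyMeasurable[m] Y) (hYnn : ∀ ω, 0 ≤ Y ω)
    (hYint : Integrable Y μ) (hZnn : ∀ ω, 0 ≤ Z ω) (hZint : Integrable Z μ)
    {C : ℝ} (hC : 0 ≤ C) (hcond : ∀ᵐ ω ∂μ, (μ[Z|m]) ω ≤ C) :
    Integrable (fun ω => Y ω * Z ω) μ ∧
      ∫ ω, Y ω * Z ω ∂μ ≤ C * ∫ ω, Y ω ∂μ := by
  set f : ℕ → Ω → ℝ := fun N ω => min (Y ω) (N : ℝ) with hf
  have hfmeas : ∀ N, StronglyMeasurable[m] (f N) := fun N =>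
    hY.inf stronglyMeasurable_const
  have hfnn : ∀ N ω, 0 ≤ f N ω := fun N ω => le_min (hYnn ω) (Nat.cast_nonneg N)
  have hfbd : ∀ N ω, ‖f N ω‖ ≤ (N : ℝ) := fun N ω => by
    rw [Real.norm_eq_abs, abs_of_nonneg (hfnn N ω)]; exact min_le_right _ _
  have hfint : ∀ N, Integrable (f N) μ := fun N =>
    hYint.mono ((hfmeas N).mono hm).aestronglyMeasurable
      (Eventually.of_forall fun ω => by
        rw [Real.norm_eq_abs, abs_of_nonneg (hfnn N ω), Real.norm_eq_abs,
          abs_of_nonneg (hYnn ω)]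
        exact min_le_left _ _)
  have hfZint : ∀ N, Integrable (fun ω => f N ω * Z ω) μ := fun N =>
    hZint.bdd_mul ((hfmeas N).mono hm).aestronglyMeasurable
      (Eventually.of_forall (hfbd N))
  have hkey : ∀ N, ∫ ω, f N ω * Z ω ∂μ ≤ C * ∫ ω, Y ω ∂μ := by
    intro N
    have hpull : μ[(fun ω => f N ω * Z ω)|m] =ᵐ[μ] fun ω => f N ω * (μ[Z|m]) ω := by
      have := condExp_stronglyMeasurable_mul_of_bound hm (hfmeas N) hZint (N : ℝ)
        (Eventually.of_forall (hfbd N))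
      exact this
    have h1 : ∫ ω, f N ω * Z ω ∂μ = ∫ ω, f N ω * (μ[Z|m]) ω ∂μ := by
      rw [← integral_condExp hm (f := fun ω => f N ω * Z ω)]
      exact integral_congr_ae hpull
    have h2 : ∫ ω, f N ω * (μ[Z|m]) ω ∂μ ≤ ∫ ω, C * f N ω ∂μ := by
      refine integral_mono_ae
        (integrable_condExp.bdd_mul ((hfmeas N).mono hm).aestronglyMeasurable
          (Eventually.of_forall (hfbd N)))
        ((hfint N).const_mul C) ?_
      filter_upwards [hcond] with ω hω
      calc f N ω * (μ[Z|m]) ω ≤ f N ω * C :=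
            mul_le_mul_of_nonneg_left hω (hfnn N ω)
        _ = C * f N ω := mul_comm _ _
    have h3 : ∫ ω, C * f N ω ∂μ ≤ C * ∫ ω, Y ω ∂μ := by
      rw [integral_const_mul]
      exact mul_le_mul_of_nonneg_left
        (integral_mono (hfint N) hYint fun ω => min_le_left _ _) hC
    exact (h1.trans_le h2).trans h3
  have hYZmeas : AEStronglyMeasurable[m0] (fun ω => Y ω * Z ω) μ :=
    hYint.1.mul hZint.1
  have hlin : ∫⁻ ω, ENNReal.ofReal (Y ω * Z ω) ∂μ ≤ ENNReal.ofReal (C * ∫ ω, Y ω ∂μ) := by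
    have hmono : ∀ᵐ ω ∂μ, Monotone fun N : ℕ => ENNReal.ofReal (f N ω * Z ω) := by
      refine Eventually.of_forall fun ω N M hNM => ?_
      exact ENNReal.ofReal_le_ofReal
        (mul_le_mul_of_nonneg_right (min_le_min le_rfl (Nat.cast_le.mpr hNM)) (hZnn ω))
    have hameas : ∀ N : ℕ, AEMeasurable (fun ω => ENNReal.ofReal (f N ω * Z ω)) μ :=
      fun N => (ENNReal.measurable_ofReal.comp_aemeasurable
        ((hfZint N).1.aemeasurable))
    have heq : ∫⁻ ω, ⨆ N : ℕ, ENNReal.ofReal (f N ω * Z ω) ∂μ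
        = ⨆ N : ℕ, ∫⁻ ω, ENNReal.ofReal (f N ω * Z ω) ∂μ :=
      lintegral_iSup' hameas hmono
    have heq2 : ∀ ω, (⨆ N : ℕ, ENNReal.ofReal (f N ω * Z ω)) = ENNReal.ofReal (Y ω * Z ω) :=
      fun ω => aux_sup_ofReal (hYnn ω) (hZnn ω)
    calc ∫⁻ ω, ENNReal.ofReal (Y ω * Z ω) ∂μ
        = ⨆ N : ℕ, ∫⁻ ω, ENNReal.ofReal (f N ω * Z ω) ∂μ := by
          rw [← heq]; exact lintegral_congr fun ω => (heq2 ω).symm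
      _ ≤ ENNReal.ofReal (C * ∫ ω, Y ω ∂μ) := by
          refine iSup_le fun N => ?_
          rw [← ofReal_integral_eq_lintegral_ofReal (hfZint N)
            (Eventually.of_forall fun ω => mul_nonneg (hfnn N ω) (hZnn ω))]
          exact ENNReal.ofReal_le_ofReal (hkey N)
  have hIntYZ : Integrable (fun ω => Y ω * Z ω) μ := by
    refine ⟨hYZmeas, ?_⟩
    rw [hasFiniteIntegral_iff_norm]
    have : ∀ ω, ENNReal.ofReal ‖Y ω * Z ω‖ = ENNReal.ofReal (Y ω * Z ω) := fun ω => by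
      rw [Real.norm_eq_abs, abs_of_nonneg (mul_nonneg (hYnn ω) (hZnn ω))]
    simp_rw [this]
    exact hlin.trans_lt ENNReal.ofReal_lt_top
  refine ⟨hIntYZ, ?_⟩
  have := ofReal_integral_eq_lintegral_ofReal hIntYZ
    (Eventually.of_forall fun ω => mul_nonneg (hYnn ω) (hZnn ω))
  have h4 : ENNReal.ofReal (∫ ω, Y ω * Z ω ∂μ) ≤ ENNReal.ofReal (C * ∫ ω, Y ω ∂μ) :=
    this ▸ hlin
  have hnn : 0 ≤ ∫ ω, Y ω * Z ω ∂μ :=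
    integral_nonneg fun ω => mul_nonneg (hYnn ω) (hZnn ω)
  exact (ENNReal.ofReal_le_ofReal_iff
    (mul_nonneg hC (integral_nonneg hYnn))).mp h4

/-- sub-exponential (Chernoff) tail bound for a martingale difference
sequence whose conditional moment generating functions are bounded as for a
sub-exponential distribution with parameters `(v, b)` (the case `k = 0` being with
respect to the trivial σ-algebra):
`P(Σ_{k<T} X_k ≥ cT) ≤ exp(−(1/2) min(c²/v², c/b) T)`. -/
theorem stmt_17 {Ω : Type*} {m0 : MeasurableSpace Ω} {ℙ : Measure Ω}
    [IsProbabilityMeasure ℙ] (ℱ : Filtration ℕ m0)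
    (v b : ℝ) (hv : 0 < v) (hb : 0 < b)
    (X : ℕ → Ω → ℝ) (hadapted : Adapted ℱ X)
    (hint : ∀ k, Integrable (X k) ℙ)
    (h0 : ∫ ω, X 0 ω ∂ℙ = 0)
    (hmart : ∀ k, ℙ[X (k + 1)|ℱ k] =ᵐ[ℙ] 0)
    (hmgfint : ∀ k, ∀ t ∈ Set.Icc (0 : ℝ) (1 / b),
      Integrable (fun ω => Real.exp (t * X k ω)) ℙ)
    (hmgf0 : ∀ t ∈ Set.Icc (0 : ℝ) (1 / b),
      ∫ ω, Real.exp (t * X 0 ω) ∂ℙ ≤ Real.exp (t ^ 2 * v ^ 2 / 2))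
    (hmgf : ∀ k, ∀ t ∈ Set.Icc (0 : ℝ) (1 / b), ∀ᵐ ω ∂ℙ,
      (ℙ[(fun ω' => Real.exp (t * X (k + 1) ω'))|ℱ k]) ω ≤ Real.exp (t ^ 2 * v ^ 2 / 2))
    (T : ℕ) (hT : 1 ≤ T) (c : ℝ) (hc : 0 ≤ c) :
    ℙ {ω | c * T ≤ ∑ k ∈ Finset.range T, X k ω}
      ≤ ENNReal.ofReal (Real.exp (-(1 / 2) * min (c ^ 2 / v ^ 2) (c / b) * T)) := by
  set l : ℝ := min (c / v ^ 2) (1 / b) with hl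
  have hl0 : 0 ≤ l := le_min (div_nonneg hc (sq_nonneg v)) (by positivity)
  have hlb : l ≤ 1 / b := min_le_right _ _
  have hlmem : l ∈ Set.Icc (0 : ℝ) (1 / b) := ⟨hl0, hlb⟩
  set C : ℝ := Real.exp (l ^ 2 * v ^ 2 / 2) with hC
  -- induction: mgf bound for partial sums
  have hS : ∀ n : ℕ,
      Integrable (fun ω => Real.exp (l * ∑ k ∈ Finset.range (n + 1), X k ω)) ℙ ∧
      ∫ ω, Real.exp (l * ∑ k ∈ Finset.range (n + 1), X k ω) ∂ℙ ≤ C ^ (n + 1) := by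
    intro n
    induction n with
    | zero =>
      simp only [zero_add, Finset.sum_range_one, pow_one]
      exact ⟨hmgfint 0 l hlmem, hmgf0 l hlmem⟩
    | succ n ih =>
      have hexp : (fun ω => Real.exp (l * ∑ k ∈ Finset.range (n + 2), X k ω))
          = fun ω => Real.exp (l * ∑ k ∈ Finset.range (n + 1), X k ω)
              * Real.exp (l * X (n + 1) ω) := by
        funext ω
        rw [Finset.sum_range_succ, mul_add, Real.exp_add]
      have hYmeas : StronglyMeasurable[ℱ n]
          (fun ω => Real.exp (l * ∑ k ∈ Finset.range (n + 1), X k ω)) := by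
        have hsum : StronglyMeasurable[ℱ n] (fun ω => ∑ k ∈ Finset.range (n + 1), X k ω) := by
          apply Finset.stronglyMeasurable_fun_sum
          intro k hk
          exact ((hadapted k).mono (ℱ.mono (Nat.lt_succ_iff.mp (Finset.mem_range.mp hk))) le_rfl).stronglyMeasurable
        exact Real.continuous_exp.comp_stronglyMeasurable (hsum.const_mul l)
      obtain ⟨hi, hle⟩ := aux_mul_le (ℱ.le n) hYmeas
        (fun ω => (Real.exp_pos _).le) ih.1
        (fun ω => (Real.exp_pos _).le) (hmgfint (n + 1) l hlmem)
        (Real.exp_pos (l ^ 2 * v ^ 2 / 2)).le (hmgf n l hlmem)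
      constructor
      · rw [hexp]; exact hi
      · rw [hexp]
        calc ∫ ω, Real.exp (l * ∑ k ∈ Finset.range (n + 1), X k ω)
                * Real.exp (l * X (n + 1) ω) ∂ℙ
            ≤ C * ∫ ω, Real.exp (l * ∑ k ∈ Finset.range (n + 1), X k ω) ∂ℙ := hle
          _ ≤ C * C ^ (n + 1) :=
              mul_le_mul_of_nonneg_left ih.2 (Real.exp_pos _).le
          _ = C ^ (n + 2) := by ring
  obtain ⟨m, rfl⟩ : ∃ m, T = m + 1 := ⟨T - 1, (Nat.succ_pred_eq_of_pos hT).symm⟩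
  obtain ⟨hSint, hSle⟩ := hS m
  have hmarkov := ProbabilityTheory.measure_ge_le_exp_mul_mgf (μ := ℙ)
    (X := fun ω => ∑ k ∈ Finset.range (m + 1), X k ω) (c * (m + 1 : ℕ)) hl0 hSint
  have hmgfle : ProbabilityTheory.mgf (fun ω => ∑ k ∈ Finset.range (m + 1), X k ω) ℙ l
      ≤ C ^ (m + 1) := hSle
  have hreal : (ℙ {ω | c * ((m : ℝ) + 1) ≤ ∑ k ∈ Finset.range (m + 1), X k ω}).toReal
      ≤ Real.exp (-(1 / 2) * min (c ^ 2 / v ^ 2) (c / b) * ((m : ℝ) + 1)) := by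
    have h1 : (ℙ {ω | c * ((m : ℝ) + 1) ≤ ∑ k ∈ Finset.range (m + 1), X k ω}).toReal
        ≤ Real.exp (-l * (c * ((m : ℝ) + 1))) * C ^ (m + 1) := by
      refine le_trans ?_ (mul_le_mul_of_nonneg_left hmgfle (Real.exp_pos _).le)
      rw [← measureReal_def]; convert hmarkov using 4 <;> push_cast <;> rfl
    refine h1.trans ?_
    rw [hC, ← Real.exp_nat_mul, ← Real.exp_add]
    apply Real.exp_le_exp.mpr
    push_cast
    have hkey : l ^ 2 * v ^ 2 / 2 - l * c ≤ -(1 / 2) * min (c ^ 2 / v ^ 2) (c / b) := by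
      rcases le_total (c / v ^ 2) (1 / b) with h | h
      · have hleq : l = c / v ^ 2 := min_eq_left h
        have hmin : min (c ^ 2 / v ^ 2) (c / b) = c ^ 2 / v ^ 2 := by
          apply min_eq_left
          have : c * (c / v ^ 2) ≤ c * (1 / b) := mul_le_mul_of_nonneg_left h hc
          calc c ^ 2 / v ^ 2 = c * (c / v ^ 2) := by ring
            _ ≤ c * (1 / b) := this
            _ = c / b := by ring
        rw [hleq, hmin]
        have hv2 : (0:ℝ) < v ^ 2 := by positivity
        have heq : (c / v ^ 2) ^ 2 * v ^ 2 / 2 - (c / v ^ 2) * c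
            = -(1 / 2) * (c ^ 2 / v ^ 2) := by field_simp; ring
        linarith
      · have hleq : l = 1 / b := min_eq_right h
        have hmin : min (c ^ 2 / v ^ 2) (c / b) = c / b := by
          apply min_eq_right
          have : c * (1 / b) ≤ c * (c / v ^ 2) := mul_le_mul_of_nonneg_left h hc
          calc c / b = c * (1 / b) := by ring
            _ ≤ c * (c / v ^ 2) := this
            _ = c ^ 2 / v ^ 2 := by ring
        rw [hleq, hmin]
        have hv2 : (0:ℝ) < v ^ 2 := by positivity
        have hcb : v ^ 2 ≤ c * b := by
          rw [div_le_div_iff₀ hb hv2] at h; linarith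
        have heq : (1 / b) ^ 2 * v ^ 2 / 2 - (1 / b) * c - (-(1 / 2) * (c / b))
            = (v ^ 2 - c * b) / (2 * b ^ 2) := by field_simp; ring
        have hnp : (v ^ 2 - c * b) / (2 * b ^ 2) ≤ 0 :=
          div_nonpos_iff.mpr (Or.inr ⟨by linarith, by positivity⟩)
        linarith
    have hT1 : (0:ℝ) ≤ (m : ℝ) + 1 := by positivity
    calc -l * (c * ((m : ℝ) + 1)) + ((m : ℝ) + 1) * (l ^ 2 * v ^ 2 / 2)
        = ((m : ℝ) + 1) * (l ^ 2 * v ^ 2 / 2 - l * c) := by ring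
      _ ≤ ((m : ℝ) + 1) * (-(1 / 2) * min (c ^ 2 / v ^ 2) (c / b)) :=
          mul_le_mul_of_nonneg_left hkey hT1
      _ = -(1 / 2) * min (c ^ 2 / v ^ 2) (c / b) * ((m : ℝ) + 1) := by ring
  have hfin : ℙ {ω | c * ((m : ℝ) + 1) ≤ ∑ k ∈ Finset.range (m + 1), X k ω} ≠ ⊤ :=
    measure_ne_top _ _
  push_cast
  calc ℙ {ω | c * ((m : ℝ) + 1) ≤ ∑ k ∈ Finset.range (m + 1), X k ω}
      = ENNReal.ofReal (ℙ {ω | c * ((m : ℝ) + 1) ≤ ∑ k ∈ Finset.range (m + 1), X k ω}).toReal :=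
        (ENNReal.ofReal_toReal hfin).symm
    _ ≤ _ := ENNReal.ofReal_le_ofReal hreal
end
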